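/- arXiv:2112.02040 — 4 statements merged into one kernel-verified Lean document; each statement's English description precedes it below -/
import Mathlib

section
/- Let R : G → SU(d) be an irreducible unitary representation of a finite group G, and fix an enumeration g₁, …, g_{|G|} of G. There exist constants C > 0 and ε* > 0 such that: for every matrix I' ∈ SL(d, ℂ) with ‖I' − I‖ ≤ ε ≤ ε*, the product f_R(I') := ∏_{k=1}^{|G|} R(g_k) I' R(g_k)† satisfies ‖f_R(I') − I‖ ≤ C·ε². -/
open Matrix
open scoped Matrix.Norms.L2Operator

section helpers

lemma aux_pow_sub_one (c : ℂ) (hc : ‖c‖ ≤ 1) (k : ℕ) :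
    ‖(1 + c) ^ k - 1‖ ≤ 2 ^ k * (k : ℝ) * ‖c‖ := by
  induction k with
  | zero => simp
  | succ k ih =>
    have h2 : ‖(1 : ℂ) + c‖ ≤ 2 := by
      calc ‖(1 : ℂ) + c‖ ≤ ‖(1:ℂ)‖ + ‖c‖ := norm_add_le _ _
        _ ≤ 2 := by rw [norm_one]; linarith
    have key : (1 + c) ^ (k + 1) - 1 = ((1 + c) ^ k - 1) * (1 + c) + c := by ring
    have h1 : (1 : ℝ) ≤ 2 ^ (k + 1) := one_le_pow₀ (by norm_num)
    calc ‖(1 + c) ^ (k + 1) - 1‖ ≤ ‖((1 + c) ^ k - 1) * (1 + c)‖ + ‖c‖ := by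
          rw [key]; exact norm_add_le _ _
      _ ≤ (2 ^ k * (k : ℝ) * ‖c‖) * 2 + ‖c‖ := by
          have := norm_mul ((1 + c) ^ k - 1) (1 + c)
          have hk0 : (0:ℝ) ≤ 2 ^ k * (k : ℝ) * ‖c‖ := by positivity
          nlinarith [norm_nonneg ((1 + c) ^ k - 1), norm_nonneg c,
            mul_le_mul ih h2 (norm_nonneg _) hk0]
      _ ≤ 2 ^ (k + 1) * ((k : ℕ) + 1 : ℝ) * ‖c‖ := by
          rw [pow_succ]
          push_cast
          have h2k : (1:ℝ) ≤ 2 ^ k * 2 := by nlinarith [one_le_pow₀ (by norm_num : (1:ℝ) ≤ 2) (n := k)]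
          nlinarith [mul_le_mul_of_nonneg_right h2k (norm_nonneg c)]
      _ = 2 ^ (k + 1) * ((k + 1 : ℕ) : ℝ) * ‖c‖ := by push_cast; ring

variable {A : Type*} [NormedRing A] [NormOneClass A] {ε : ℝ}

lemma list_prod_norm_le (L : List A) (hL : ∀ F ∈ L, ‖F‖ ≤ ε) (hε1 : ε ≤ 1) :
    ‖(L.map (fun F => 1 + F)).prod‖ ≤ 2 ^ L.length := by
  induction L with
  | nil => simp
  | cons F T ih =>
    have hF := hL F (by simp)
    have hT : ∀ X ∈ T, ‖X‖ ≤ ε := fun X hX => hL X (by simp [hX])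
    simp only [List.map_cons, List.prod_cons, List.length_cons]
    calc ‖(1 + F) * (T.map (fun F => 1 + F)).prod‖
        ≤ ‖1 + F‖ * ‖(T.map (fun F => 1 + F)).prod‖ := norm_mul_le _ _
      _ ≤ 2 * 2 ^ T.length := by
          refine mul_le_mul ?_ (ih hT) (norm_nonneg _) (by norm_num)
          calc ‖1 + F‖ ≤ ‖(1:A)‖ + ‖F‖ := norm_add_le _ _
            _ ≤ 2 := by rw [norm_one]; linarith
      _ = 2 ^ (T.length + 1) := by rw [pow_succ]; ring

lemma list_prod_sub_one (L : List A) (hL : ∀ F ∈ L, ‖F‖ ≤ ε) (hε0 : 0 ≤ ε) (hε1 : ε ≤ 1) :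
    ‖(L.map (fun F => 1 + F)).prod - 1‖ ≤ 2 ^ L.length * L.length * ε := by
  induction L with
  | nil => simp
  | cons F T ih =>
    have hF := hL F (by simp)
    have hT : ∀ X ∈ T, ‖X‖ ≤ ε := fun X hX => hL X (by simp [hX])
    simp only [List.map_cons, List.prod_cons, List.length_cons]
    have key : (1 + F) * (T.map (fun F => 1 + F)).prod - 1
        = ((T.map (fun F => 1 + F)).prod - 1) + F * (T.map (fun F => 1 + F)).prod := by
      noncomm_ring
    have hP := list_prod_norm_le T hT hε1
    calc ‖(1 + F) * (T.map (fun F => 1 + F)).prod - 1‖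
        ≤ ‖(T.map (fun F => 1 + F)).prod - 1‖ + ‖F * (T.map (fun F => 1 + F)).prod‖ := by
          rw [key]; exact norm_add_le _ _
      _ ≤ 2 ^ T.length * T.length * ε + ε * 2 ^ T.length := by
          refine add_le_add (ih hT) ?_
          calc ‖F * (T.map (fun F => 1 + F)).prod‖ ≤ ‖F‖ * ‖(T.map (fun F => 1 + F)).prod‖ :=
                norm_mul_le _ _
            _ ≤ ε * 2 ^ T.length := mul_le_mul hF hP (norm_nonneg _) hε0
      _ ≤ 2 ^ (T.length + 1) * (↑(T.length + 1)) * ε := by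
          rw [pow_succ]
          push_cast
          have hu : (0:ℝ) ≤ 2 ^ T.length * T.length * ε := by positivity
          have hv : (0:ℝ) ≤ ε * 2 ^ T.length := by positivity
          nlinarith [hu, hv]

lemma list_prod_sub_one_sub_sum (L : List A) (hL : ∀ F ∈ L, ‖F‖ ≤ ε) (hε0 : 0 ≤ ε)
    (hε1 : ε ≤ 1) :
    ‖(L.map (fun F => 1 + F)).prod - 1 - L.sum‖ ≤ 4 ^ L.length * L.length ^ 2 * ε ^ 2 := by
  induction L with
  | nil => simp
  | cons F T ih =>
    have hF := hL F (by simp)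
    have hT : ∀ X ∈ T, ‖X‖ ≤ ε := fun X hX => hL X (by simp [hX])
    simp only [List.map_cons, List.prod_cons, List.length_cons, List.sum_cons]
    have key : (1 + F) * (T.map (fun F => 1 + F)).prod - 1 - (F + T.sum)
        = ((T.map (fun F => 1 + F)).prod - 1 - T.sum)
          + F * ((T.map (fun F => 1 + F)).prod - 1) := by
      noncomm_ring
    have hP1 := list_prod_sub_one T hT hε0 hε1
    have h24 : (2:ℝ) ^ T.length ≤ 4 ^ T.length := by
      exact pow_le_pow_left₀ (by norm_num) (by norm_num) T.length
    calc ‖(1 + F) * (T.map (fun F => 1 + F)).prod - 1 - (F + T.sum)‖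
        ≤ ‖(T.map (fun F => 1 + F)).prod - 1 - T.sum‖
          + ‖F * ((T.map (fun F => 1 + F)).prod - 1)‖ := by rw [key]; exact norm_add_le _ _
      _ ≤ 4 ^ T.length * T.length ^ 2 * ε ^ 2 + ε * (2 ^ T.length * T.length * ε) := by
          refine add_le_add (ih hT) ?_
          calc ‖F * ((T.map (fun F => 1 + F)).prod - 1)‖
              ≤ ‖F‖ * ‖(T.map (fun F => 1 + F)).prod - 1‖ := norm_mul_le _ _
            _ ≤ ε * (2 ^ T.length * T.length * ε) := mul_le_mul hF hP1 (norm_nonneg _) hε0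
      _ ≤ 4 ^ (T.length + 1) * (↑(T.length + 1) : ℝ) ^ 2 * ε ^ 2 := by
          rw [pow_succ (4:ℝ) T.length]
          push_cast
          have hl0 : (0:ℝ) ≤ (T.length : ℝ) := Nat.cast_nonneg _
          have h1 : (2:ℝ) ^ T.length * T.length * ε ^ 2 ≤ 4 ^ T.length * T.length * ε ^ 2 := by
            have := mul_le_mul_of_nonneg_right h24 hl0
            exact mul_le_mul_of_nonneg_right this (sq_nonneg ε)
          have h2 : (0:ℝ) ≤ (4:ℝ) ^ T.length * ε ^ 2 := by positivity
          have h3 : (0:ℝ) ≤ (4:ℝ) ^ T.length * (T.length:ℝ) ^ 2 * ε ^ 2 := by positivity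
          have h4 : (0:ℝ) ≤ (4:ℝ) ^ T.length * (T.length:ℝ) * ε ^ 2 := by positivity
          nlinarith [h1, h2, h3, h4]

lemma euclid_coord_le {n : Type*} [Fintype n] (y : EuclideanSpace ℂ n) (i : n) :
    ‖y i‖ ≤ ‖y‖ := by
  rw [EuclideanSpace.norm_eq]
  have h : ‖y i‖ ^ 2 ≤ ∑ k, ‖y k‖ ^ 2 :=
    Finset.single_le_sum (f := fun k => ‖y k‖ ^ 2) (fun k _ => sq_nonneg _) (Finset.mem_univ i)
  calc ‖y i‖ = Real.sqrt (‖y i‖ ^ 2) := (Real.sqrt_sq (norm_nonneg _)).symm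
    _ ≤ _ := Real.sqrt_le_sqrt h

lemma entry_norm_le {d : ℕ} (A : Matrix (Fin d) (Fin d) ℂ) (i j : Fin d) : ‖A i j‖ ≤ ‖A‖ := by
  classical
  have h := Matrix.l2_opNorm_mulVec A (EuclideanSpace.single j (1:ℂ))
  rw [EuclideanSpace.norm_single, norm_one, mul_one] at h
  have hcoord := euclid_coord_le ((EuclideanSpace.equiv (Fin d) ℂ).symm
    (A *ᵥ (EuclideanSpace.single j (1:ℂ)))) i
  have hval : ((EuclideanSpace.equiv (Fin d) ℂ).symm
      (A *ᵥ (EuclideanSpace.single j (1:ℂ)))) i = A i j := by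
    show (A *ᵥ (EuclideanSpace.single j (1:ℂ))) i = A i j
    simp [Matrix.mulVec, dotProduct, EuclideanSpace.single_apply]
  rw [hval] at hcoord
  exact hcoord.trans h

end helpers




lemma norm_prod_sub_prod_le' {ι : Type*} [DecidableEq ι] (s : Finset ι) (f g : ι → ℂ)
    (M δ : ℝ) (hM : 0 ≤ M) (hδ : 0 ≤ δ)
    (hf : ∀ i ∈ s, ‖f i‖ ≤ M) (hg : ∀ i ∈ s, ‖g i‖ ≤ M) (hfg : ∀ i ∈ s, ‖f i - g i‖ ≤ δ) :
    ‖∏ i ∈ s, f i - ∏ i ∈ s, g i‖ ≤ s.card * M ^ (s.card - 1) * δ := by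
  induction s using Finset.induction_on with
  | empty => simp
  | @insert a s ha ih =>
    have hfs : ∀ i ∈ s, ‖f i‖ ≤ M := fun i hi => hf i (Finset.mem_insert_of_mem hi)
    have hgs : ∀ i ∈ s, ‖g i‖ ≤ M := fun i hi => hg i (Finset.mem_insert_of_mem hi)
    have hfgs : ∀ i ∈ s, ‖f i - g i‖ ≤ δ := fun i hi => hfg i (Finset.mem_insert_of_mem hi)
    have hfa := hf a (Finset.mem_insert_self a s)
    have hga := hg a (Finset.mem_insert_self a s)
    have hfga := hfg a (Finset.mem_insert_self a s)
    rw [Finset.prod_insert ha, Finset.prod_insert ha, Finset.card_insert_of_notMem ha]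
    have key : f a * ∏ i ∈ s, f i - g a * ∏ i ∈ s, g i
        = (f a - g a) * ∏ i ∈ s, f i + g a * (∏ i ∈ s, f i - ∏ i ∈ s, g i) := by ring
    have hPf : ‖∏ i ∈ s, f i‖ ≤ M ^ s.card := by
      rw [norm_prod]
      calc ∏ i ∈ s, ‖f i‖ ≤ ∏ _i ∈ s, M :=
            Finset.prod_le_prod (fun i _ => norm_nonneg _) hfs
        _ = M ^ s.card := Finset.prod_const M
    have hstep : M * (↑s.card * M ^ (s.card - 1) * δ) ≤ ↑s.card * M ^ s.card * δ := by
      rcases Nat.eq_zero_or_pos s.card with h | h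
      · simp [h]
      · obtain ⟨k, hk⟩ := Nat.exists_eq_succ_of_ne_zero h.ne'
        rw [hk]
        simp only [Nat.succ_sub_one]
        apply le_of_eq
        rw [pow_succ]
        push_cast
        ring
    calc ‖f a * ∏ i ∈ s, f i - g a * ∏ i ∈ s, g i‖
        ≤ ‖(f a - g a) * ∏ i ∈ s, f i‖ + ‖g a * (∏ i ∈ s, f i - ∏ i ∈ s, g i)‖ := by
          rw [key]; exact norm_add_le _ _
      _ ≤ δ * M ^ s.card + M * (↑s.card * M ^ (s.card - 1) * δ) := by
          refine add_le_add ?_ ?_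
          · rw [norm_mul]
            exact mul_le_mul hfga hPf (norm_nonneg _) hδ
          · rw [norm_mul]
            exact mul_le_mul hga (ih hfs hgs hfgs) (norm_nonneg _) hM
      _ ≤ δ * M ^ s.card + ↑s.card * M ^ s.card * δ := by linarith
      _ ≤ ↑(s.card + 1) * M ^ (s.card + 1 - 1) * δ := by
          simp only [Nat.add_sub_cancel]
          push_cast
          apply le_of_eq
          ring

lemma det_diff_le {d : ℕ} (A B : Matrix (Fin d) (Fin d) ℂ) (M δ : ℝ) (hM : 0 ≤ M) (hδ : 0 ≤ δ)
    (hA : ∀ i j, ‖A i j‖ ≤ M) (hB : ∀ i j, ‖B i j‖ ≤ M) (hAB : ∀ i j, ‖A i j - B i j‖ ≤ δ) :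
    ‖A.det - B.det‖ ≤
      (Fintype.card (Equiv.Perm (Fin d)) : ℝ) * ((d : ℝ) * M ^ (d - 1) * δ) := by
  classical
  rw [Matrix.det_apply, Matrix.det_apply, ← Finset.sum_sub_distrib]
  refine le_trans (norm_sum_le _ _) ?_
  have hterm : ∀ σ : Equiv.Perm (Fin d), σ ∈ Finset.univ →
      ‖(Equiv.Perm.sign σ • ∏ i, A (σ i) i) - Equiv.Perm.sign σ • ∏ i, B (σ i) i‖
        ≤ (d : ℝ) * M ^ (d - 1) * δ := by
    intro σ _
    rw [← smul_sub]
    have hsn : ‖Equiv.Perm.sign σ • ((∏ i, A (σ i) i) - ∏ i, B (σ i) i)‖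
        = ‖(∏ i, A (σ i) i) - ∏ i, B (σ i) i‖ := by
      rcases Int.units_eq_one_or (Equiv.Perm.sign σ) with h | h <;>
        simp [h, Units.smul_def, norm_sub_rev]
    rw [hsn]
    have := norm_prod_sub_prod_le' (Finset.univ : Finset (Fin d))
      (fun i => A (σ i) i) (fun i => B (σ i) i) M δ hM hδ
      (fun i _ => hA _ _) (fun i _ => hB _ _) (fun i _ => hAB _ _)
    simpa [Finset.card_univ] using this
  refine le_trans (Finset.sum_le_card_nsmul _ _ _ hterm) ?_
  rw [Finset.card_univ, nsmul_eq_mul]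

set_option maxHeartbeats 1000000 in
/-- Multiplicative group twirl over an irreducible special unitary representation of a
finite group focuses an approximate identity (with determinant one) onto the identity
to quadratic precision:  `‖∏_k R(g_k) I' R(g_k)† - I‖ ≤ C ε²`. -/
theorem multiplicative_twirl_focuses_identity (d : ℕ) (hd : 0 < d)
    (G : Type) [Group G] [Fintype G]
    (R : G → Matrix (Fin d) (Fin d) ℂ)
    (hmem : ∀ g : G, R g ∈ Matrix.specialUnitaryGroup (Fin d) ℂ)
    (hone : R 1 = 1)
    (hmul : ∀ g h : G, R (g * h) = R g * R h)
    (hirr : ∀ M : Matrix (Fin d) (Fin d) ℂ,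
      (∀ g : G, R g * M = M * R g) → ∃ c : ℂ, M = c • (1 : Matrix (Fin d) (Fin d) ℂ))
    (e : Fin (Fintype.card G) ≃ G) :
    ∃ C : ℝ, 0 < C ∧ ∃ εstar : ℝ, 0 < εstar ∧
      ∀ (ε : ℝ) (I' : Matrix (Fin d) (Fin d) ℂ),
        I'.det = 1 → ‖I' - 1‖ ≤ ε → ε ≤ εstar →
        ‖((List.finRange (Fintype.card G)).map
            (fun k => R (e k) * I' * (R (e k))ᴴ)).prod - 1‖ ≤ C * ε ^ 2 := by
  classical
  haveI : Nonempty (Fin d) := ⟨⟨0, hd⟩⟩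
  haveI : Nontrivial (Matrix (Fin d) (Fin d) ℂ) := by
    refine ⟨⟨0, 1, fun h => ?_⟩⟩
    have := congrFun (congrFun h ⟨0, hd⟩) ⟨0, hd⟩
    simp [Matrix.one_apply] at this
  revert e
  set n := Fintype.card G with hn
  intro e
  have hn0 : 0 < n := Fintype.card_pos
  have hn1 : (1 : ℝ) ≤ (n : ℝ) := by exact_mod_cast hn0
  have hd1 : (1 : ℝ) ≤ (d : ℝ) := by exact_mod_cast hd
  set X1 : ℝ := 4 ^ n * (n : ℝ) ^ 2 with hX1
  set Abig : ℝ := (d : ℝ) ^ 2 * 2 ^ d with hAbig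
  set X2 : ℝ := (n : ℝ) * (2 * Abig) with hX2
  set K1 : ℝ := (Fintype.card (Equiv.Perm (Fin d)) : ℝ) *
    ((d : ℝ) * ((n : ℝ) + 2) ^ (d - 1) * X1) with hK1
  have hX1pos : 0 < X1 := by positivity
  have hAbigpos : 0 < Abig := by positivity
  have hK1nonneg : 0 ≤ K1 := by positivity
  refine ⟨X1 + 2 * K1 / d, by positivity,
    min 1 (min (1 / (X1 + 1)) (1 / (X2 + 1))), by positivity, ?_⟩
  intro ε I' hdet hEε hεs
  set E : Matrix (Fin d) (Fin d) ℂ := I' - 1 with hE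
  have hε0 : 0 ≤ ε := le_trans (norm_nonneg E) hEε
  have hε1 : ε ≤ 1 := le_trans hεs (min_le_left _ _)
  have hεX1 : ε ≤ 1 / (X1 + 1) := le_trans hεs (le_trans (min_le_right _ _) (min_le_left _ _))
  have hεX2 : ε ≤ 1 / (X2 + 1) := le_trans hεs (le_trans (min_le_right _ _) (min_le_right _ _))
  -- unitarity facts
  have hU : ∀ g : G, R g ∈ Matrix.unitaryGroup (Fin d) ℂ ∧ (R g).det = 1 :=
    fun g => (Matrix.mem_specialUnitaryGroup_iff).1 (hmem g)
  have hRRH : ∀ g : G, R g * (R g)ᴴ = 1 := fun g => by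
    have := (Matrix.mem_unitaryGroup_iff).1 (hU g).1
    simpa [Matrix.star_eq_conjTranspose] using this
  have hRHR : ∀ g : G, (R g)ᴴ * R g = 1 := fun g => by
    have := (Matrix.mem_unitaryGroup_iff').1 (hU g).1
    simpa [Matrix.star_eq_conjTranspose] using this
  have hRinv : ∀ g : G, (R g)ᴴ = R g⁻¹ := fun g => by
    have h1 : R g * R g⁻¹ = 1 := by rw [← hmul]; simp [hone]
    calc (R g)ᴴ = (R g)ᴴ * (R g * R g⁻¹) := by rw [h1, mul_one]
      _ = ((R g)ᴴ * R g) * R g⁻¹ := by rw [mul_assoc]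
      _ = R g⁻¹ := by rw [hRHR, one_mul]
  have hnormR : ∀ g : G, ‖R g‖ = 1 := fun g => CStarRing.norm_of_mem_unitary (hU g).1
  have hconj : ∀ (g : G) (X : Matrix (Fin d) (Fin d) ℂ), ‖R g * X * (R g)ᴴ‖ ≤ ‖X‖ := by
    intro g X
    calc ‖R g * X * (R g)ᴴ‖ ≤ ‖R g * X‖ * ‖(R g)ᴴ‖ := norm_mul_le _ _
      _ ≤ (‖R g‖ * ‖X‖) * ‖(R g)ᴴ‖ :=
          mul_le_mul_of_nonneg_right (norm_mul_le _ _) (norm_nonneg _)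
      _ = ‖X‖ := by rw [Matrix.l2_opNorm_conjTranspose, hnormR]; ring
  -- the list of perturbations
  set F : Fin n → Matrix (Fin d) (Fin d) ℂ := fun k => R (e k) * E * (R (e k))ᴴ with hF
  set L : List (Matrix (Fin d) (Fin d) ℂ) := (List.finRange n).map F with hL
  have hlen : L.length = n := by simp [hL]
  have hLnorm : ∀ X ∈ L, ‖X‖ ≤ ε := by
    intro X hX
    rw [hL] at hX
    obtain ⟨k, _, rfl⟩ := List.mem_map.1 hX
    exact le_trans (hconj _ _) hEε
  -- identify the product
  have hlist_eq : (List.finRange n).map (fun k => R (e k) * I' * (R (e k))ᴴ)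
      = L.map (fun X => 1 + X) := by
    rw [hL, List.map_map]
    refine List.map_congr_left (fun k _ => ?_)
    show R (e k) * I' * (R (e k))ᴴ = 1 + F k
    have hI' : I' = 1 + E := by rw [hE]; abel
    rw [hF, hI', mul_add, mul_one, add_mul, hRRH]
  set P : Matrix (Fin d) (Fin d) ℂ := (L.map (fun X => 1 + X)).prod with hP
  -- the linear term and irreducibility
  set T : Matrix (Fin d) (Fin d) ℂ := ∑ g : G, R g * E * (R g)ᴴ with hT
  have hLsum : L.sum = T := by
    rw [hL, ← Fin.sum_univ_def, hT]
    exact Equiv.sum_comp e (fun g => R g * E * (R g)ᴴ)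
  have hcomm : ∀ h : G, R h * T = T * R h := by
    intro h
    have lhs : R h * T = ∑ g : G, R (h * g) * E * (R g)ᴴ := by
      rw [hT, Finset.mul_sum]
      exact Finset.sum_congr rfl fun g _ => by rw [← mul_assoc, ← mul_assoc, ← hmul]
    have rhs : T * R h = ∑ g : G, R g * E * ((R g)ᴴ * R h) := by
      rw [hT, Finset.sum_mul]
      exact Finset.sum_congr rfl fun g _ => by rw [mul_assoc]
    rw [lhs, rhs]
    calc ∑ g : G, R (h * g) * E * (R g)ᴴ
        = ∑ g : G, R (h * g) * E * R ((h * g)⁻¹ * h) := by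
          refine Finset.sum_congr rfl fun g _ => ?_
          rw [hRinv]
          congr 2
          group
      _ = ∑ g : G, R g * E * R (g⁻¹ * h) := by
          have := Equiv.sum_comp (Equiv.mulLeft h) (fun g => R g * E * R (g⁻¹ * h))
          simpa using this
      _ = ∑ g : G, R g * E * ((R g)ᴴ * R h) := by
          refine Finset.sum_congr rfl fun g _ => ?_
          rw [hRinv, ← hmul]
  obtain ⟨c, hc⟩ := hirr T hcomm
  -- norm bounds on T and c
  have hTnorm : ‖T‖ ≤ (n : ℝ) * ε := by
    calc ‖T‖ ≤ ∑ g : G, ‖R g * E * (R g)ᴴ‖ := norm_sum_le _ _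
      _ ≤ ∑ _g : G, ε := Finset.sum_le_sum fun g _ => le_trans (hconj g E) hEε
      _ = (n : ℝ) * ε := by rw [Finset.sum_const, Finset.card_univ, nsmul_eq_mul]
  have hcT : ‖c‖ = ‖T‖ := by rw [hc, norm_smul, norm_one, mul_one]
  have hcn : ‖c‖ ≤ (n : ℝ) * ε := hcT ▸ hTnorm
  have hcsmall : ‖c‖ ≤ 1 / (2 * Abig) := by
    have h1 : (n : ℝ) * ε ≤ (n : ℝ) * (1 / (X2 + 1)) :=
      mul_le_mul_of_nonneg_left hεX2 (by positivity)
    have h2 : (n : ℝ) * (1 / (X2 + 1)) ≤ 1 / (2 * Abig) := by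
      rw [mul_one_div, div_le_div_iff₀ (by positivity) (by positivity), hX2]
      nlinarith
    linarith
  have hc1 : ‖c‖ ≤ 1 := by
    have h2A : (1 : ℝ) ≤ 2 * Abig := by
      rw [hAbig]
      nlinarith [one_le_pow₀ (by norm_num : (1:ℝ) ≤ 2) (n := d)]
    calc ‖c‖ ≤ 1 / (2 * Abig) := hcsmall
      _ ≤ 1 := by rw [div_le_one (by positivity)]; linarith
  -- quadratic remainder bound
  set δ : ℝ := X1 * ε ^ 2 with hδ
  have hδ0 : 0 ≤ δ := by positivity
  have hQ : ‖P - 1 - T‖ ≤ δ := by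
    have h := list_prod_sub_one_sub_sum L hLnorm hε0 hε1
    rw [hlen, hLsum] at h
    calc ‖P - 1 - T‖ ≤ 4 ^ n * (n : ℝ) ^ 2 * ε ^ 2 := h
      _ = δ := by rw [hδ, hX1]
  have hδ1 : δ ≤ 1 := by
    have hsq : ε ^ 2 ≤ ε := pow_le_of_le_one hε0 hε1 (by norm_num)
    have h1 : δ ≤ X1 * ε := by
      rw [hδ]; exact mul_le_mul_of_nonneg_left hsq (le_of_lt hX1pos)
    have h2 : X1 * ε ≤ X1 * (1 / (X1 + 1)) := mul_le_mul_of_nonneg_left hεX1 (le_of_lt hX1pos)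
    have h3 : X1 * (1 / (X1 + 1)) ≤ 1 := by
      rw [mul_one_div, div_le_one (by positivity)]
      linarith
    linarith
  -- determinant of the product is one
  have hdetP : P.det = 1 := by
    rw [hP, ← hlist_eq]
    have h1 := List.prod_hom ((List.finRange n).map fun k => R (e k) * I' * (R (e k))ᴴ)
      (Matrix.detMonoidHom (n := Fin d) (R := ℂ))
    have h1' : (((List.finRange n).map fun k => R (e k) * I' * (R (e k))ᴴ).map
        Matrix.det).prod
        = (((List.finRange n).map fun k => R (e k) * I' * (R (e k))ᴴ).prod).det := by
      simpa [Matrix.coe_detMonoidHom] using h1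
    rw [← h1', List.map_map]
    have h2 : (Matrix.det ∘ fun k => R (e k) * I' * (R (e k))ᴴ) = fun _ : Fin n => (1 : ℂ) := by
      funext k
      show (R (e k) * I' * (R (e k))ᴴ).det = 1
      rw [Matrix.det_mul, Matrix.det_mul, hdet, Matrix.det_conjTranspose, (hU (e k)).2]
      simp
    rw [h2]
    simp
  -- decomposition of P
  have hPdecomp : P = (1 + c) • (1 : Matrix (Fin d) (Fin d) ℂ) + (P - 1 - T) := by
    rw [add_smul, one_smul, hc]
    abel
  -- entrywise bounds
  have hBent : ∀ i j, ‖((1 + c) • (1 : Matrix (Fin d) (Fin d) ℂ)) i j‖ ≤ (n : ℝ) + 1 := by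
    intro i j
    rw [Matrix.smul_apply, Matrix.one_apply]
    by_cases hij : i = j
    · simp only [hij, if_true, smul_eq_mul, mul_one]
      have h1 : ‖(1 : ℂ) + c‖ ≤ ‖(1 : ℂ)‖ + ‖c‖ := norm_add_le _ _
      rw [norm_one] at h1
      have h2 : (n : ℝ) * ε ≤ (n : ℝ) * 1 := mul_le_mul_of_nonneg_left hε1 (by positivity)
      linarith [hcn]
    · simp only [hij, if_false, smul_zero, norm_zero]
      positivity
  have hQent : ∀ i j, ‖(P - 1 - T) i j‖ ≤ δ := fun i j => le_trans (entry_norm_le _ i j) hQ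
  have hPent : ∀ i j, ‖P i j‖ ≤ (n : ℝ) + 2 := by
    intro i j
    have h1 : P i j = ((1 + c) • (1 : Matrix (Fin d) (Fin d) ℂ)) i j + (P - 1 - T) i j := by
      conv_lhs => rw [hPdecomp]
      rw [Matrix.add_apply]
    rw [h1]
    calc ‖_ + _‖ ≤ ‖((1 + c) • (1 : Matrix (Fin d) (Fin d) ℂ)) i j‖ + ‖(P - 1 - T) i j‖ :=
          norm_add_le _ _
      _ ≤ ((n : ℝ) + 1) + 1 := add_le_add (hBent i j) (le_trans (hQent i j) hδ1)
      _ = (n : ℝ) + 2 := by ring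
  have hBent2 : ∀ i j, ‖((1 + c) • (1 : Matrix (Fin d) (Fin d) ℂ)) i j‖ ≤ (n : ℝ) + 2 :=
    fun i j => le_trans (hBent i j) (by linarith)
  have hdiffent : ∀ i j, ‖P i j - ((1 + c) • (1 : Matrix (Fin d) (Fin d) ℂ)) i j‖ ≤ δ := by
    intro i j
    have h1 : P i j - ((1 + c) • (1 : Matrix (Fin d) (Fin d) ℂ)) i j = (P - 1 - T) i j := by
      conv_lhs => rw [hPdecomp]
      rw [Matrix.add_apply]
      ring
    rw [h1]
    exact hQent i j
  -- determinant comparison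
  have hdetB : ((1 + c) • (1 : Matrix (Fin d) (Fin d) ℂ)).det = (1 + c) ^ d := by
    rw [Matrix.det_smul, Matrix.det_one, mul_one, Fintype.card_fin]
  have hdd := det_diff_le P ((1 + c) • (1 : Matrix (Fin d) (Fin d) ℂ)) ((n : ℝ) + 2) δ
    (by positivity) hδ0 hPent hBent2 hdiffent
  rw [hdetP, hdetB] at hdd
  have hdd' : ‖(1 + c) ^ d - 1‖ ≤ K1 * ε ^ 2 := by
    rw [norm_sub_rev] at hdd
    calc ‖(1 + c) ^ d - 1‖ ≤ _ := hdd
      _ = K1 * ε ^ 2 := by rw [hK1, hδ]; ring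
  -- geometric series argument
  have hgeom : (1 + c) ^ d - 1 = (∑ k ∈ Finset.range d, (1 + c) ^ k) * c := by
    have h := geom_sum_mul (1 + c) d
    simpa using h.symm
  set S : ℂ := ∑ k ∈ Finset.range d, (1 + c) ^ k with hS
  have hSsub : ‖S - (d : ℂ)‖ ≤ Abig * ‖c‖ := by
    have h1 : S - (d : ℂ) = ∑ k ∈ Finset.range d, ((1 + c) ^ k - 1) := by
      rw [hS, Finset.sum_sub_distrib]
      simp
    rw [h1]
    calc ‖∑ k ∈ Finset.range d, ((1 + c) ^ k - 1)‖
        ≤ ∑ k ∈ Finset.range d, ‖(1 + c) ^ k - 1‖ := norm_sum_le _ _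
      _ ≤ ∑ _k ∈ Finset.range d, (2 : ℝ) ^ d * (d : ℝ) * ‖c‖ := by
          refine Finset.sum_le_sum fun k hk => ?_
          have hkd : k ≤ d := le_of_lt (Finset.mem_range.1 hk)
          calc ‖(1 + c) ^ k - 1‖ ≤ 2 ^ k * (k : ℝ) * ‖c‖ := aux_pow_sub_one c hc1 k
            _ ≤ 2 ^ d * (d : ℝ) * ‖c‖ := by
                have h2k : (2 : ℝ) ^ k ≤ 2 ^ d := pow_le_pow_right₀ (by norm_num) hkd
                have hkc : (k : ℝ) ≤ (d : ℝ) := Nat.cast_le.2 hkd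
                have h3 := mul_le_mul h2k hkc (Nat.cast_nonneg _) (by positivity)
                exact mul_le_mul_of_nonneg_right h3 (norm_nonneg c)
      _ = (d : ℝ) * ((2 : ℝ) ^ d * (d : ℝ) * ‖c‖) := by
          rw [Finset.sum_const, Finset.card_range, nsmul_eq_mul]
      _ = Abig * ‖c‖ := by rw [hAbig]; ring
  have hSlower : (d : ℝ) / 2 ≤ ‖S‖ := by
    have hnormd : ‖(d : ℂ)‖ = (d : ℝ) := by simp
    have h1 : ‖(d : ℂ)‖ - ‖S‖ ≤ ‖S - (d : ℂ)‖ := by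
      rw [norm_sub_rev]
      exact norm_sub_norm_le _ _
    have h2 : Abig * ‖c‖ ≤ (d : ℝ) / 2 := by
      calc Abig * ‖c‖ ≤ Abig * (1 / (2 * Abig)) :=
            mul_le_mul_of_nonneg_left hcsmall (le_of_lt hAbigpos)
        _ = 1 / 2 := by field_simp
        _ ≤ (d : ℝ) / 2 := by linarith
    rw [hnormd] at h1
    linarith
  have hcfinal : ‖c‖ ≤ 2 / (d : ℝ) * (K1 * ε ^ 2) := by
    have h1 : ‖(1 + c) ^ d - 1‖ = ‖S‖ * ‖c‖ := by rw [hgeom, norm_mul]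
    have h2 : (d : ℝ) / 2 * ‖c‖ ≤ ‖S‖ * ‖c‖ :=
      mul_le_mul_of_nonneg_right hSlower (norm_nonneg c)
    have h3 : (d : ℝ) / 2 * ‖c‖ ≤ K1 * ε ^ 2 := by
      rw [h1] at hdd'
      linarith
    have hd0 : (0 : ℝ) < (d : ℝ) := by exact_mod_cast hd
    calc ‖c‖ = 2 / (d : ℝ) * ((d : ℝ) / 2 * ‖c‖) := by field_simp
      _ ≤ 2 / (d : ℝ) * (K1 * ε ^ 2) := mul_le_mul_of_nonneg_left h3 (by positivity)
  -- conclusion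
  rw [hlist_eq, ← hP]
  have hfin1 : ‖P - 1‖ ≤ ‖P - 1 - T‖ + ‖T‖ := by
    have h := norm_add_le (P - 1 - T) T
    rwa [sub_add_cancel] at h
  have hTc : ‖T‖ ≤ 2 / (d : ℝ) * (K1 * ε ^ 2) := by
    rw [← hcT]; exact hcfinal
  have heq : X1 * ε ^ 2 + 2 / (d : ℝ) * (K1 * ε ^ 2) = (X1 + 2 * K1 / (d : ℝ)) * ε ^ 2 := by
    ring
  have hQ' : ‖P - 1 - T‖ ≤ X1 * ε ^ 2 := by rw [← hδ]; exact hQ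
  linarith [hfin1, hTc, hQ']
end

section
/- Let R : G → SU(d) be an irreducible unitary representation of a finite group G. There exist constants C > 0 and ε* > 0 such that: for any V ∈ SU(d) and any W ∈ SU(d) with ‖W − V†‖ ≤ ε ≤ ε*, the matrix V'' := [∏_{g ∈ G, g ≠ id} R(g) W V R(g)†] · W satisfies ‖V · V'' − I‖ ≤ C·ε². -/
open Matrix
open scoped Matrix.Norms.L2Operator

namespace IFH


variable {d : ℕ}

/-- Entries are bounded by the L2 operator norm. -/
lemma entry_le_norm (A : Matrix (Fin d) (Fin d) ℂ) (i j : Fin d) :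
    ‖A i j‖ ≤ ‖A‖ := by
  have h := A.l2_opNorm_mulVec (EuclideanSpace.single j (1 : ℂ))
  rw [EuclideanSpace.norm_single] at h
  simp only [norm_one, mul_one] at h
  refine le_trans ?_ h
  set x := (EuclideanSpace.equiv (Fin d) ℂ).symm (A *ᵥ (EuclideanSpace.single j (1:ℂ)))
    with hxdef
  have hx : x i = A i j := by
    simp only [hxdef, EuclideanSpace.equiv, LinearEquiv.coe_toContinuousLinearEquiv_symm,
      WithLp.linearEquiv_symm_apply]
    show (A *ᵥ (EuclideanSpace.single j (1:ℂ))) i = A i j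
    simp [Matrix.mulVec, dotProduct, EuclideanSpace.single_apply, mul_ite]
  have h2 : ‖x i‖ ^ 2 ≤ ‖x‖ ^ 2 := by
    rw [PiLp.norm_sq_eq_of_L2]
    exact Finset.single_le_sum (f := fun k => ‖x k‖ ^ 2)
      (fun k _ => sq_nonneg _) (Finset.mem_univ i)
  rw [← hx]
  exact (pow_le_pow_iff_left₀ (norm_nonneg _) (norm_nonneg _) two_ne_zero).mp h2



variable {d : ℕ}

lemma det_piecewise_singleton (A : Matrix (Fin d) (Fin d) ℂ) (i : Fin d) :
    Matrix.det (Matrix.of (({i} : Finset (Fin d)).piecewise (A : Fin d → Fin d → ℂ)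
      (1 : Matrix (Fin d) (Fin d) ℂ))) = A i i := by
  have h1 : Matrix.of (({i} : Finset (Fin d)).piecewise (A : Fin d → Fin d → ℂ)
      (1 : Matrix (Fin d) (Fin d) ℂ)) = (1 : Matrix (Fin d) (Fin d) ℂ).updateRow i (A i) := by
    ext a b
    by_cases hab : a = i <;> simp [Matrix.updateRow_apply, Finset.piecewise, hab]
  rw [h1, ← Matrix.det_transpose, ← Matrix.updateCol_transpose, Matrix.transpose_one,
    ← Matrix.cramer_apply, Matrix.cramer_one]
  rfl

lemma det_piecewise_bound (A : Matrix (Fin d) (Fin d) ℂ) {ε : ℝ}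
    (hA : ∀ i j, ‖A i j‖ ≤ ε) (hε : ε ≤ 1) (hε0 : 0 ≤ ε) (S : Finset (Fin d)) (hS : 2 ≤ S.card) :
    ‖Matrix.det (Matrix.of (S.piecewise (A : Fin d → Fin d → ℂ)
      (1 : Matrix (Fin d) (Fin d) ℂ)))‖ ≤ (Nat.factorial d : ℝ) * ε ^ 2 := by
  set M : Matrix (Fin d) (Fin d) ℂ :=
    Matrix.of (S.piecewise (A : Fin d → Fin d → ℂ) (1 : Matrix (Fin d) (Fin d) ℂ)) with hM
  rw [Matrix.det_apply]
  refine le_trans (norm_sum_le _ _) ?_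
  have key : ∀ σ : Equiv.Perm (Fin d),
      ‖Equiv.Perm.sign σ • ∏ i, M (σ i) i‖ ≤ ε ^ 2 := by
    intro σ
    have hsign : ‖Equiv.Perm.sign σ • ∏ i, M (σ i) i‖ = ‖∏ i, M (σ i) i‖ := by
      rcases Int.units_eq_one_or (Equiv.Perm.sign σ) with h | h <;> simp [h]
    rw [hsign]
    rw [norm_prod]
    have hre : ∏ i, ‖M (σ i) i‖ = ∏ j, ‖M j (σ⁻¹ j)‖ := by
      rw [← Equiv.prod_comp σ (fun j => ‖M j (σ⁻¹ j)‖)]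
      simp
    rw [hre]
    have hle : ∏ j, ‖M j (σ⁻¹ j)‖ ≤ ∏ j, (if j ∈ S then ε else 1) := by
      refine Finset.prod_le_prod (fun j _ => norm_nonneg _) ?_
      intro j _
      by_cases hj : j ∈ S
      · simp only [hj, if_true, hM]
        show ‖(S.piecewise (A : Fin d → Fin d → ℂ) (1 : Matrix (Fin d) (Fin d) ℂ)) j (σ⁻¹ j)‖ ≤ ε
        rw [show S.piecewise (A : Fin d → Fin d → ℂ) (1 : Matrix (Fin d) (Fin d) ℂ) j = A j from S.piecewise_eq_of_mem _ _ hj]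
        exact hA j (σ⁻¹ j)
      · simp only [hj, if_false, hM]
        show ‖(S.piecewise (A : Fin d → Fin d → ℂ) (1 : Matrix (Fin d) (Fin d) ℂ)) j (σ⁻¹ j)‖ ≤ 1
        rw [show S.piecewise (A : Fin d → Fin d → ℂ) (1 : Matrix (Fin d) (Fin d) ℂ) j = (1 : Matrix (Fin d) (Fin d) ℂ) j from S.piecewise_eq_of_notMem _ _ hj, Matrix.one_apply]
        split <;> simp
    refine le_trans hle ?_
    rw [Finset.prod_ite_mem, Finset.univ_inter, Finset.prod_const]
    exact pow_le_pow_of_le_one hε0 hε hS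
  refine le_trans (Finset.sum_le_sum (fun σ _ => key σ)) ?_
  rw [Finset.sum_const, Finset.card_univ, Fintype.card_perm, Fintype.card_fin, nsmul_eq_mul]

lemma det_expansion (hd : 0 < d) (A : Matrix (Fin d) (Fin d) ℂ) {ε : ℝ}
    (hent : ∀ i j, ‖A i j‖ ≤ ε) (hε0 : 0 ≤ ε) (hε : ε ≤ 1) :
    ‖Matrix.det (1 + A) - 1 - Matrix.trace A‖ ≤ ((2:ℝ)^d * Nat.factorial d) * ε ^ 2 := by
  classical
  haveI : Nonempty (Fin d) := ⟨⟨0, hd⟩⟩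
  set t : Finset (Fin d) → ℂ := fun S =>
    Matrix.det (Matrix.of (S.piecewise (A : Fin d → Fin d → ℂ)
      (1 : Matrix (Fin d) (Fin d) ℂ))) with ht
  have expand : Matrix.det (1 + A) = ∑ S : Finset (Fin d), t S := by
    have h := (Matrix.detRowAlternating (n := Fin d) (R := ℂ)).toMultilinearMap.map_add_univ
      (A : Fin d → Fin d → ℂ) ((1 : Matrix (Fin d) (Fin d) ℂ) : Fin d → Fin d → ℂ)
    have h1 : (1 : Matrix (Fin d) (Fin d) ℂ) + A
        = ((A : Fin d → Fin d → ℂ) + ((1 : Matrix (Fin d) (Fin d) ℂ) : Fin d → Fin d → ℂ)) := by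
      rw [add_comm]
    rw [Matrix.det, h1]
    exact h
  -- split the sum
  have hsplit := Finset.sum_filter_add_sum_filter_not Finset.univ
    (fun S : Finset (Fin d) => S.card ≤ 1) t
  have hlow : ∑ S ∈ Finset.univ.filter (fun S : Finset (Fin d) => S.card ≤ 1), t S
      = 1 + Matrix.trace A := by
    have hset : Finset.univ.filter (fun S : Finset (Fin d) => S.card ≤ 1)
        = insert (∅ : Finset (Fin d)) (Finset.univ.image fun i : Fin d => ({i} : Finset (Fin d))) := by
      ext S
      simp only [Finset.mem_filter, Finset.mem_univ, true_and, Finset.mem_insert,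
        Finset.mem_image]
      constructor
      · intro h
        rcases Finset.card_le_one_iff_subset_singleton.mp h with ⟨a, ha⟩
        rcases Finset.subset_singleton_iff.mp ha with h' | h'
        · exact Or.inl h'
        · exact Or.inr ⟨a, h'.symm⟩
      · rintro (rfl | ⟨a, rfl⟩) <;> simp
    rw [hset, Finset.sum_insert (by simp)]
    have h0 : t ∅ = 1 := by
      simp only [ht, Finset.piecewise_empty]
      exact Matrix.det_one
    have h1 : ∑ S ∈ Finset.univ.image (fun i : Fin d => ({i} : Finset (Fin d))), t S
        = Matrix.trace A := by
      rw [Finset.sum_image (fun i _ j _ h => by simpa using h)]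
      simp only [ht]
      rw [Matrix.trace]
      exact Finset.sum_congr rfl (fun i _ => det_piecewise_singleton A i)
    rw [h0, h1]
  have hrem : ‖∑ S ∈ Finset.univ.filter (fun S : Finset (Fin d) => ¬ S.card ≤ 1), t S‖
      ≤ ((2:ℝ)^d * Nat.factorial d) * ε ^ 2 := by
    refine le_trans (norm_sum_le _ _) ?_
    have hb : ∀ S ∈ Finset.univ.filter (fun S : Finset (Fin d) => ¬ S.card ≤ 1),
        ‖t S‖ ≤ (Nat.factorial d : ℝ) * ε ^ 2 := by
      intro S hSmem
      simp only [Finset.mem_filter, not_le] at hSmem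
      exact det_piecewise_bound A hent hε hε0 S hSmem.2
    refine le_trans (Finset.sum_le_sum hb) ?_
    rw [Finset.sum_const, nsmul_eq_mul]
    rw [mul_assoc]
    refine mul_le_mul_of_nonneg_right ?_ (by positivity)
    calc ((Finset.univ.filter (fun S : Finset (Fin d) => ¬ S.card ≤ 1)).card : ℝ)
        ≤ (Finset.univ : Finset (Finset (Fin d))).card := by
          exact_mod_cast Finset.card_le_card (Finset.filter_subset _ _)
      _ = (2:ℝ)^d := by rw [Finset.card_univ, Fintype.card_finset]; simp [Fintype.card_fin]
  have : Matrix.det (1 + A) - 1 - Matrix.trace A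
      = ∑ S ∈ Finset.univ.filter (fun S : Finset (Fin d) => ¬ S.card ≤ 1), t S := by
    rw [expand, ← hsplit, hlow]; ring
  rw [this]
  exact hrem



variable {d : ℕ}

lemma prod_one_add_sub_one (hd : 0 < d) {ε : ℝ} (hε0 : 0 ≤ ε) (hε1 : ε ≤ 1) :
    ∀ L : List (Matrix (Fin d) (Fin d) ℂ), (∀ a ∈ L, ‖a‖ ≤ ε) →
      ‖(L.map (fun a => 1 + a)).prod - 1‖ ≤ ((2:ℝ) ^ L.length - 1) * ε := by
  haveI : Nonempty (Fin d) := ⟨⟨0, hd⟩⟩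
  intro L
  induction L with
  | nil => intro _; simp
  | cons a L ih =>
    intro hmem
    have ha : ‖a‖ ≤ ε := hmem a List.mem_cons_self
    have hL : ∀ b ∈ L, ‖b‖ ≤ ε := fun b hb => hmem b (List.mem_cons_of_mem a hb)
    have ihL := ih hL
    set Q := (L.map (fun a => 1 + a)).prod with hQ
    have hQnorm : ‖Q‖ ≤ 1 + ((2:ℝ) ^ L.length - 1) * ε := by
      calc ‖Q‖ = ‖(1 : Matrix (Fin d) (Fin d) ℂ) + (Q - 1)‖ := by congr 1; abel
        _ ≤ ‖(1 : Matrix (Fin d) (Fin d) ℂ)‖ + ‖Q - 1‖ := norm_add_le _ _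
        _ ≤ 1 + ((2:ℝ) ^ L.length - 1) * ε := by
            rw [CStarRing.norm_one]; linarith
    have hexp : ((a :: L).map (fun a => 1 + a)).prod - 1 = (Q - 1) + a * Q := by
      simp only [List.map_cons, List.prod_cons, ← hQ]
      noncomm_ring
    rw [hexp]
    have h2 : (0:ℝ) ≤ 2 ^ L.length - 1 := by
      have : (1:ℝ) ≤ 2 ^ L.length := one_le_pow₀ (by norm_num)
      linarith
    calc ‖(Q - 1) + a * Q‖ ≤ ‖Q - 1‖ + ‖a‖ * ‖Q‖ :=
          le_trans (norm_add_le _ _) (by gcongr; exact norm_mul_le _ _)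
      _ ≤ ((2:ℝ) ^ L.length - 1) * ε + ε * (1 + ((2:ℝ) ^ L.length - 1) * ε) := by
          gcongr
      _ ≤ ((2:ℝ) ^ (a :: L).length - 1) * ε := by
          simp only [List.length_cons, pow_succ]
          nlinarith [mul_nonneg h2 (mul_nonneg hε0 (sub_nonneg.mpr hε1))]
lemma prod_one_add_expansion (hd : 0 < d) {ε : ℝ} (hε0 : 0 ≤ ε) (hε1 : ε ≤ 1) :
    ∀ L : List (Matrix (Fin d) (Fin d) ℂ), (∀ a ∈ L, ‖a‖ ≤ ε) →
      ‖(L.map (fun a => 1 + a)).prod - 1 - L.sum‖ ≤ (2:ℝ) ^ L.length * ε ^ 2 := by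
  haveI : Nonempty (Fin d) := ⟨⟨0, hd⟩⟩
  intro L
  induction L with
  | nil => intro _; simp; positivity
  | cons a L ih =>
    intro hmem
    have ha : ‖a‖ ≤ ε := hmem a List.mem_cons_self
    have hL : ∀ b ∈ L, ‖b‖ ≤ ε := fun b hb => hmem b (List.mem_cons_of_mem a hb)
    have ihL := ih hL
    have hQ1 := prod_one_add_sub_one hd hε0 hε1 L hL
    set Q := (L.map (fun a => 1 + a)).prod with hQ
    have hexp : ((a :: L).map (fun a => 1 + a)).prod - 1 - (a :: L).sum
        = (Q - 1 - L.sum) + a * (Q - 1) := by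
      simp only [List.map_cons, List.prod_cons, List.sum_cons, ← hQ]
      noncomm_ring
    rw [hexp]
    have h2 : (0:ℝ) ≤ 2 ^ L.length - 1 := by
      have : (1:ℝ) ≤ 2 ^ L.length := one_le_pow₀ (by norm_num)
      linarith
    calc ‖(Q - 1 - L.sum) + a * (Q - 1)‖ ≤ ‖Q - 1 - L.sum‖ + ‖a‖ * ‖Q - 1‖ :=
          le_trans (norm_add_le _ _) (by gcongr; exact norm_mul_le _ _)
      _ ≤ (2:ℝ) ^ L.length * ε ^ 2 + ε * (((2:ℝ) ^ L.length - 1) * ε) := by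
          gcongr
      _ ≤ (2:ℝ) ^ (a :: L).length * ε ^ 2 := by
          simp only [List.length_cons, pow_succ]
          nlinarith [mul_nonneg h2 (sq_nonneg ε)]


end IFH


/-- Inverse factory with an exact irrep: if `W` is an `ε`-approximate inverse of
`V ∈ SU(d)`, then `V'' = [∏_{g ≠ 1} R(g) (W V) R(g)†] W` is an `O(ε²)`-precise
inverse of `V`, for any fixed ordering of the non-identity group elements. -/
theorem inverse_factory_with_irrep (d : ℕ) (hd : 0 < d)
    (G : Type) [Group G] [Fintype G]
    (R : G → Matrix (Fin d) (Fin d) ℂ)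
    (hmem : ∀ g : G, R g ∈ Matrix.specialUnitaryGroup (Fin d) ℂ)
    (hone : R 1 = 1)
    (hmul : ∀ g h : G, R (g * h) = R g * R h)
    (hirr : ∀ M : Matrix (Fin d) (Fin d) ℂ,
      (∀ g : G, R g * M = M * R g) → ∃ c : ℂ, M = c • (1 : Matrix (Fin d) (Fin d) ℂ)) :
    ∃ C : ℝ, 0 < C ∧ ∃ εstar : ℝ, 0 < εstar ∧
      ∀ (l : List G), l.Nodup → (∀ g : G, g ∈ l ↔ g ≠ 1) →
      ∀ (ε : ℝ) (V W : Matrix (Fin d) (Fin d) ℂ),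
        V ∈ Matrix.specialUnitaryGroup (Fin d) ℂ →
        W ∈ Matrix.specialUnitaryGroup (Fin d) ℂ →
        ‖W - Vᴴ‖ ≤ ε → ε ≤ εstar →
        ‖V * ((l.map (fun g => R g * (W * V) * (R g)ᴴ)).prod * W) - 1‖ ≤ C * ε ^ 2 := by
  classical
  haveI : Nonempty (Fin d) := ⟨⟨0, hd⟩⟩
  set K₀ : ℝ := (2:ℝ)^d * Nat.factorial d with hK₀
  have hK₀pos : 0 < K₀ := by positivity
  set nG : ℕ := Fintype.card G with hnG
  refine ⟨1 + nG * K₀ / d + 2 ^ nG, by positivity, 1, one_pos, ?_⟩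
  intro l hnodup hcov ε V W hV hW hWV hε1
  obtain ⟨hVu, hVdet⟩ := Matrix.mem_specialUnitaryGroup_iff.mp hV
  obtain ⟨hWu, hWdet⟩ := Matrix.mem_specialUnitaryGroup_iff.mp hW
  have hε0 : 0 ≤ ε := le_trans (norm_nonneg _) hWV
  have hVnorm : ‖V‖ = 1 := CStarRing.norm_of_mem_unitary hVu
  have hWnorm : ‖W‖ = 1 := CStarRing.norm_of_mem_unitary hWu
  -- the error Δ
  set Δ : Matrix (Fin d) (Fin d) ℂ := W * V - 1 with hΔdef
  have hVHV : Vᴴ * V = 1 := by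
    have := Matrix.mem_unitaryGroup_iff'.mp hVu
    rwa [Matrix.star_eq_conjTranspose] at this
  have hVVH : V * Vᴴ = 1 := by
    have := Matrix.mem_unitaryGroup_iff.mp hVu
    rwa [Matrix.star_eq_conjTranspose] at this
  have hΔnorm : ‖Δ‖ ≤ ε := by
    have hfac : Δ = (W - Vᴴ) * V := by
      rw [Matrix.sub_mul, hVHV, hΔdef]
    rw [hfac]
    calc ‖(W - Vᴴ) * V‖ ≤ ‖W - Vᴴ‖ * ‖V‖ := norm_mul_le _ _
      _ = ‖W - Vᴴ‖ := by rw [hVnorm, mul_one]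
      _ ≤ ε := hWV
  -- trace bound
  have htr : ‖Matrix.trace Δ‖ ≤ K₀ * ε ^ 2 := by
    have hdet : Matrix.det (1 + Δ) = 1 := by
      have : (1 : Matrix (Fin d) (Fin d) ℂ) + Δ = W * V := by rw [hΔdef]; abel
      rw [this, Matrix.det_mul, hWdet, hVdet, one_mul]
    have h := IFH.det_expansion hd Δ
      (fun i j => le_trans (IFH.entry_le_norm Δ i j) hΔnorm) hε0 hε1
    rw [hdet] at h
    simpa using h
  -- R g basics
  have hRgH : ∀ g : G, (R g)ᴴ = R g⁻¹ := by
    intro g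
    have h1 : (R g)ᴴ * R g = 1 := by
      have := Matrix.mem_unitaryGroup_iff'.mp (Matrix.mem_specialUnitaryGroup_iff.mp (hmem g)).1
      rwa [Matrix.star_eq_conjTranspose] at this
    have h2 : R g * R g⁻¹ = 1 := by rw [← hmul, mul_inv_cancel, hone]
    calc (R g)ᴴ = (R g)ᴴ * (R g * R g⁻¹) := by rw [h2, mul_one]
      _ = ((R g)ᴴ * R g) * R g⁻¹ := by rw [mul_assoc]
      _ = R g⁻¹ := by rw [h1, one_mul]
  have hRnorm : ∀ g : G, ‖R g‖ = 1 := fun g =>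
    CStarRing.norm_of_mem_unitary (Matrix.mem_specialUnitaryGroup_iff.mp (hmem g)).1
  -- conjugated errors
  set A : G → Matrix (Fin d) (Fin d) ℂ := fun g => R g * Δ * (R g)ᴴ with hAdef
  have hA1 : A 1 = Δ := by
    simp [hAdef, hone]
  have hAnorm : ∀ g : G, ‖A g‖ ≤ ε := by
    intro g
    calc ‖R g * Δ * (R g)ᴴ‖ ≤ ‖R g * Δ‖ * ‖(R g)ᴴ‖ := norm_mul_le _ _
      _ ≤ ‖R g‖ * ‖Δ‖ * ‖(R g)ᴴ‖ := by gcongr; exact norm_mul_le _ _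
      _ = ‖Δ‖ := by rw [Matrix.l2_opNorm_conjTranspose, hRnorm g]; ring
      _ ≤ ε := hΔnorm
  -- rewrite the factors
  have hmap : l.map (fun g => R g * (W * V) * (R g)ᴴ) = l.map (fun g => 1 + A g) := by
    refine List.map_congr_left (fun g _ => ?_)
    have hRRH : R g * (R g)ᴴ = 1 := by
      have := Matrix.mem_unitaryGroup_iff.mp (Matrix.mem_specialUnitaryGroup_iff.mp (hmem g)).1
      rwa [Matrix.star_eq_conjTranspose] at this
    have hWV1 : W * V = 1 + Δ := by rw [hΔdef]; abel
    rw [hWV1, hAdef]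
    calc R g * (1 + Δ) * (R g)ᴴ = R g * (R g)ᴴ + R g * Δ * (R g)ᴴ := by noncomm_ring
      _ = 1 + R g * Δ * (R g)ᴴ := by rw [hRRH]
  -- the sum over the whole group
  set M : Matrix (Fin d) (Fin d) ℂ := ∑ g : G, A g with hMdef
  have hcomm : ∀ h : G, R h * M = M * R h := by
    intro h
    have step : ∀ g : G, R h * A g = A (h * g) * R h := by
      intro g
      simp only [hAdef, hRgH]
      rw [_root_.mul_inv_rev]
      calc R h * (R g * Δ * R g⁻¹) = (R h * R g) * Δ * R g⁻¹ := by noncomm_ring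
        _ = R (h * g) * Δ * R g⁻¹ := by rw [hmul]
        _ = R (h * g) * Δ * (R (g⁻¹ * h⁻¹) * R h) := by rw [← hmul]; group
        _ = R (h * g) * Δ * R (g⁻¹ * h⁻¹) * R h := by noncomm_ring
    rw [hMdef, Finset.mul_sum, Finset.sum_mul]
    calc ∑ g : G, R h * A g = ∑ g : G, A (h * g) * R h := by
          exact Finset.sum_congr rfl (fun g _ => step g)
      _ = ∑ g : G, A g * R h := Equiv.sum_comp (Equiv.mulLeft h) (fun g => A g * R h)
  obtain ⟨c, hc⟩ := hirr M hcomm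
  -- compute the trace of M
  have htrM : Matrix.trace M = (nG : ℂ) * Matrix.trace Δ := by
    rw [hMdef, Matrix.trace_sum]
    have : ∀ g : G, Matrix.trace (A g) = Matrix.trace Δ := by
      intro g
      rw [hAdef]
      simp only []
      rw [hRgH, Matrix.trace_mul_cycle, ← hmul, inv_mul_cancel, hone, one_mul]
    rw [Finset.sum_congr rfl (fun g _ => this g), Finset.sum_const, Finset.card_univ,
      nsmul_eq_mul, hnG]
  have hcval : c * d = (nG : ℂ) * Matrix.trace Δ := by
    have := congrArg Matrix.trace hc
    rw [htrM, Matrix.trace_smul, Matrix.trace_one] at this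
    simpa [smul_eq_mul, Fintype.card_fin, mul_comm] using this.symm
  have hcbound : ‖c‖ ≤ (nG : ℝ) * (K₀ * ε ^ 2) / d := by
    have h1 : ‖c * (d:ℂ)‖ = ‖c‖ * d := by
      rw [norm_mul]
      simp
    have h2 : ‖(nG : ℂ) * Matrix.trace Δ‖ ≤ (nG : ℝ) * (K₀ * ε ^ 2) := by
      rw [norm_mul]
      have : ‖(nG : ℂ)‖ = (nG : ℝ) := by simp
      rw [this]
      exact mul_le_mul_of_nonneg_left htr (by positivity)
    have h3 : ‖c‖ * d ≤ (nG : ℝ) * (K₀ * ε ^ 2) := by rw [← h1, hcval]; exact h2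
    rw [le_div_iff₀ (by exact_mod_cast hd)]
    exact h3
  -- the list of conjugated errors
  set Lm : List (Matrix (Fin d) (Fin d) ℂ) := l.map A with hLm
  have hLmem : ∀ a ∈ Lm, ‖a‖ ≤ ε := by
    intro a ha
    rcases List.mem_map.mp ha with ⟨g, -, rfl⟩
    exact hAnorm g
  have hlen : Lm.length = l.length := List.length_map _
  have hlength : l.length ≤ nG := by
    rw [← List.toFinset_card_of_nodup hnodup, hnG, ← Finset.card_univ]
    exact Finset.card_le_univ _
  set P : Matrix (Fin d) (Fin d) ℂ := (Lm.map (fun a => 1 + a)).prod with hPdef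
  set E : Matrix (Fin d) (Fin d) ℂ := P - 1 - Lm.sum with hEdef
  have hEnorm : ‖E‖ ≤ (2:ℝ) ^ l.length * ε ^ 2 := by
    have h := IFH.prod_one_add_expansion hd hε0 hε1 Lm hLmem
    rw [hlen] at h
    exact h
  -- the list sum equals M - Δ
  have hsum : Lm.sum = M - Δ := by
    have h1 : Lm.sum = ∑ g ∈ l.toFinset, A g := (List.sum_toFinset A hnodup).symm
    have h2 : l.toFinset = Finset.univ.erase 1 := by
      ext g
      simp [hcov g, Finset.mem_erase]
    have h3 := Finset.sum_erase_add Finset.univ A (Finset.mem_univ (1:G))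
    rw [hA1] at h3
    rw [h1, h2, hMdef]
    have := eq_sub_of_add_eq h3
    exact this
  have hsum' : Lm.sum = c • (1 : Matrix (Fin d) (Fin d) ℂ) - Δ := by rw [hsum, hc]
  -- rewrite the product in the goal
  have hprod : (l.map (fun g => R g * (W * V) * (R g)ᴴ)).prod = P := by
    rw [hmap, hPdef, hLm, List.map_map]
    rfl
  -- the key algebraic identity
  have hPd : P = 1 + (c • (1 : Matrix (Fin d) (Fin d) ℂ) - Δ) + E := by
    rw [hEdef, hsum']
    abel
  have hkey : V * (P * W) - 1
      = -((V * W - 1) * (V * W - 1)) + c • (V * W) + V * (E * W) := by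
    rw [hPd, hΔdef]
    simp only [mul_add, add_mul, sub_mul, mul_sub, one_mul, mul_one,
      smul_mul_assoc, mul_smul_comm, mul_assoc]
    abel
  -- norm bounds
  have hVW1 : ‖V * W - 1‖ ≤ ε := by
    have hfac : V * W - 1 = V * (W - Vᴴ) := by rw [mul_sub, hVVH]
    rw [hfac]
    calc ‖V * (W - Vᴴ)‖ ≤ ‖V‖ * ‖W - Vᴴ‖ := norm_mul_le _ _
      _ = ‖W - Vᴴ‖ := by rw [hVnorm, one_mul]
      _ ≤ ε := hWV
  have hVWnorm : ‖V * W‖ ≤ 1 := by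
    calc ‖V * W‖ ≤ ‖V‖ * ‖W‖ := norm_mul_le _ _
      _ = 1 := by rw [hVnorm, hWnorm, one_mul]
  have b1 : ‖(V * W - 1) * (V * W - 1)‖ ≤ ε ^ 2 := by
    calc ‖(V * W - 1) * (V * W - 1)‖ ≤ ‖V * W - 1‖ * ‖V * W - 1‖ := norm_mul_le _ _
      _ ≤ ε * ε := mul_le_mul hVW1 hVW1 (norm_nonneg _) hε0
      _ = ε ^ 2 := by ring
  have b2 : ‖c • (V * W)‖ ≤ (nG : ℝ) * K₀ / d * ε ^ 2 := by
    rw [norm_smul]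
    calc ‖c‖ * ‖V * W‖ ≤ ((nG : ℝ) * (K₀ * ε ^ 2) / d) * 1 :=
          mul_le_mul hcbound hVWnorm (norm_nonneg _) (by positivity)
      _ = (nG : ℝ) * K₀ / d * ε ^ 2 := by ring
  have b3 : ‖V * (E * W)‖ ≤ (2:ℝ) ^ nG * ε ^ 2 := by
    have h2pow : (2:ℝ) ^ l.length ≤ 2 ^ nG := by
      exact pow_le_pow_right₀ (by norm_num) hlength
    calc ‖V * (E * W)‖ ≤ ‖V‖ * ‖E * W‖ := norm_mul_le _ _
      _ = ‖E * W‖ := by rw [hVnorm, one_mul]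
      _ ≤ ‖E‖ * ‖W‖ := norm_mul_le _ _
      _ = ‖E‖ := by rw [hWnorm, mul_one]
      _ ≤ (2:ℝ) ^ l.length * ε ^ 2 := hEnorm
      _ ≤ (2:ℝ) ^ nG * ε ^ 2 := by gcongr <;> norm_num
  -- finish
  rw [hprod, hkey]
  calc ‖-((V * W - 1) * (V * W - 1)) + c • (V * W) + V * (E * W)‖
      ≤ ‖-((V * W - 1) * (V * W - 1))‖ + ‖c • (V * W)‖ + ‖V * (E * W)‖ := norm_add₃_le
    _ = ‖(V * W - 1) * (V * W - 1)‖ + ‖c • (V * W)‖ + ‖V * (E * W)‖ := by rw [norm_neg]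
    _ ≤ ε ^ 2 + (nG : ℝ) * K₀ / d * ε ^ 2 + (2:ℝ) ^ nG * ε ^ 2 :=
        add_le_add (add_le_add b1 b2) b3
    _ = (1 + (nG : ℝ) * K₀ / d + 2 ^ nG) * ε ^ 2 := by ring
end

section
/- Let V, W, V₁, W₁ ∈ SU(d) with ‖V − V₁‖ ≤ ε, ‖W − W₁‖ ≤ ε, ‖V − I‖ ≤ c·ε^{1/2}, ‖W − I‖ ≤ c·ε^{1/2}. Then ‖VWV†W† − V₁W₁V₁†W₁†‖ ≤ C·ε^{3/2} for a constant C depending only on c (and for ε ≤ 1). -/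
open Matrix
open scoped Matrix.Norms.L2Operator

/-- Left multiplication by a unitary preserves the L2 operator norm. -/
lemma aux_norm_unitary_mul {d : ℕ} {U : Matrix (Fin d) (Fin d) ℂ} (h : Uᴴ * U = 1)
    (X : Matrix (Fin d) (Fin d) ℂ) : ‖U * X‖ = ‖X‖ := by
  have h1 : ‖U * X‖ * ‖U * X‖ = ‖X‖ * ‖X‖ := by
    rw [← Matrix.l2_opNorm_conjTranspose_mul_self (U * X), Matrix.conjTranspose_mul,
      mul_assoc, ← mul_assoc Uᴴ U X, h, one_mul, Matrix.l2_opNorm_conjTranspose_mul_self]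
  rcases mul_self_eq_mul_self_iff.mp h1 with h2 | h2
  · exact h2
  · have h3 : ‖X‖ = 0 := by nlinarith [norm_nonneg (U * X), norm_nonneg X]
    rw [h2, h3, neg_zero]

/-- Right multiplication by a unitary preserves the L2 operator norm. -/
lemma aux_norm_mul_unitary {d : ℕ} {U : Matrix (Fin d) (Fin d) ℂ} (h : U * Uᴴ = 1)
    (X : Matrix (Fin d) (Fin d) ℂ) : ‖X * U‖ = ‖X‖ := by
  rw [← Matrix.l2_opNorm_conjTranspose (X * U), Matrix.conjTranspose_mul,
    aux_norm_unitary_mul (by rw [Matrix.conjTranspose_conjTranspose]; exact h) Xᴴ,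
    Matrix.l2_opNorm_conjTranspose]

set_option maxHeartbeats 2000000 in
/-- Error cancellation in the approximate group commutator: if `V₁, W₁ ∈ SU(d)` are
`ε`-approximations to `V, W ∈ SU(d)` and `V, W` are `c·√ε`-close to the identity,
then the group commutators are `C·ε^{3/2}`-close, with `C` depending only on `c`. -/
theorem group_commutator_error_cancellation (c : ℝ) (hc : 0 < c) :
    ∃ C : ℝ, 0 < C ∧
      ∀ (d : ℕ) (ε : ℝ) (V W V₁ W₁ : Matrix (Fin d) (Fin d) ℂ),
        V ∈ Matrix.specialUnitaryGroup (Fin d) ℂ →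
        W ∈ Matrix.specialUnitaryGroup (Fin d) ℂ →
        V₁ ∈ Matrix.specialUnitaryGroup (Fin d) ℂ →
        W₁ ∈ Matrix.specialUnitaryGroup (Fin d) ℂ →
        ε ≤ 1 →
        ‖V - V₁‖ ≤ ε → ‖W - W₁‖ ≤ ε →
        ‖V - 1‖ ≤ c * Real.sqrt ε → ‖W - 1‖ ≤ c * Real.sqrt ε →
        ‖V * W * Vᴴ * Wᴴ - V₁ * W₁ * V₁ᴴ * W₁ᴴ‖ ≤ C * ε ^ ((3 : ℝ) / 2) := by
  refine ⟨4 * c + 13, by positivity, ?_⟩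
  intro d ε V W V₁ W₁ hV hW hV1 hW1 hε1 hVe hWe hVc hWc
  -- basic facts about ε
  have hε0 : 0 ≤ ε := le_trans (norm_nonneg _) hVe
  set s := Real.sqrt ε with hs
  have hs0 : 0 ≤ s := Real.sqrt_nonneg ε
  have hεs : ε ≤ s := by
    nlinarith [Real.sq_sqrt hε0, Real.sqrt_nonneg ε, sq_nonneg (Real.sqrt ε - 1)]
  have hεεs : ε * ε ≤ ε * s := mul_le_mul_of_nonneg_left hεs hε0
  have hpow : ε ^ ((3 : ℝ) / 2) = ε * s := by
    rw [show (3 : ℝ) / 2 = 1 + 1 / 2 by norm_num, Real.rpow_add' hε0 (by norm_num),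
      Real.rpow_one, hs, Real.sqrt_eq_rpow]
  -- unitarity
  have uu : ∀ U : Matrix (Fin d) (Fin d) ℂ, U ∈ Matrix.specialUnitaryGroup (Fin d) ℂ →
      U * Uᴴ = 1 ∧ Uᴴ * U = 1 := by
    intro U hU
    have h := (Matrix.mem_specialUnitaryGroup_iff.mp hU).1
    constructor
    · have h2 := Matrix.mem_unitaryGroup_iff.mp h
      rwa [Matrix.star_eq_conjTranspose] at h2
    · have h2 := Matrix.mem_unitaryGroup_iff'.mp h
      rwa [Matrix.star_eq_conjTranspose] at h2
  obtain ⟨hVu, hVu'⟩ := uu V hV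
  obtain ⟨hWu, hWu'⟩ := uu W hW
  obtain ⟨hV1u, _⟩ := uu V₁ hV1
  obtain ⟨hW1u, _⟩ := uu W₁ hW1
  -- the perturbations
  set A := V₁ - V with hA
  set B := W₁ - W with hB
  have hV₁e : V₁ = V + A := by rw [hA]; abel
  have hW₁e : W₁ = W + B := by rw [hB]; abel
  have hAn : ‖A‖ ≤ ε := by rw [hA, norm_sub_rev]; exact hVe
  have hBn : ‖B‖ ≤ ε := by rw [hB, norm_sub_rev]; exact hWe
  have hAcn : ‖Aᴴ‖ ≤ ε := by rw [Matrix.l2_opNorm_conjTranspose]; exact hAn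
  have hBcn : ‖Bᴴ‖ ≤ ε := by rw [Matrix.l2_opNorm_conjTranspose]; exact hBn
  -- unitarity relations for the perturbations
  have hArel : V * Aᴴ + A * Vᴴ + A * Aᴴ = 0 := by
    have h := hV1u
    rw [hV₁e, Matrix.conjTranspose_add] at h
    have h2 : V * Aᴴ + A * Vᴴ + A * Aᴴ = (V + A) * (Vᴴ + Aᴴ) - V * Vᴴ := by noncomm_ring
    rw [h2, h, hVu, sub_self]
  have hBrel : W * Bᴴ + B * Wᴴ + B * Bᴴ = 0 := by
    have h := hW1u
    rw [hW₁e, Matrix.conjTranspose_add] at h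
    have h2 : W * Bᴴ + B * Wᴴ + B * Bᴴ = (W + B) * (Wᴴ + Bᴴ) - W * Wᴴ := by noncomm_ring
    rw [h2, h, hWu, sub_self]
  have hVV0 : (1 : Matrix (Fin d) (Fin d) ℂ) - Vᴴ * V = 0 := by rw [hVu', sub_self]
  have hWW0 : (1 : Matrix (Fin d) (Fin d) ℂ) - Wᴴ * W = 0 := by rw [hWu', sub_self]
  -- unitary invariance helpers
  have nVl : ∀ X : Matrix (Fin d) (Fin d) ℂ, ‖V * X‖ = ‖X‖ :=
    fun X => aux_norm_unitary_mul hVu' X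
  have nWl : ∀ X : Matrix (Fin d) (Fin d) ℂ, ‖W * X‖ = ‖X‖ :=
    fun X => aux_norm_unitary_mul hWu' X
  have nVhl : ∀ X : Matrix (Fin d) (Fin d) ℂ, ‖Vᴴ * X‖ = ‖X‖ :=
    fun X => aux_norm_unitary_mul (by rw [Matrix.conjTranspose_conjTranspose]; exact hVu) X
  have nWhl : ∀ X : Matrix (Fin d) (Fin d) ℂ, ‖Wᴴ * X‖ = ‖X‖ :=
    fun X => aux_norm_unitary_mul (by rw [Matrix.conjTranspose_conjTranspose]; exact hWu) X
  have nVhr : ∀ X : Matrix (Fin d) (Fin d) ℂ, ‖X * Vᴴ‖ = ‖X‖ :=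
    fun X => aux_norm_mul_unitary (by rw [Matrix.conjTranspose_conjTranspose]; exact hVu') X
  have nWhr : ∀ X : Matrix (Fin d) (Fin d) ℂ, ‖X * Wᴴ‖ = ‖X‖ :=
    fun X => aux_norm_mul_unitary (by rw [Matrix.conjTranspose_conjTranspose]; exact hWu') X
  -- the master algebraic identity
  have master : V₁ * W₁ * V₁ᴴ * W₁ᴴ - V * W * Vᴴ * Wᴴ =
      (A * W - V * W * Vᴴ * A) * Vᴴ * Wᴴ
      + V * ((B * Vᴴ - W * Vᴴ * Wᴴ * B) * Wᴴ)
      + (-(V * (W * (Vᴴ * (A * Aᴴ * Wᴴ))))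
        - V * (W * (Vᴴ * (Wᴴ * (B * Bᴴ))))
        + A * B * Vᴴ * Wᴴ + A * (W * (Aᴴ * Wᴴ)) + A * (W * (Vᴴ * Bᴴ)) + V * (B * (Aᴴ * Wᴴ))
        + V * (B * (Vᴴ * Bᴴ)) + V * (W * (Aᴴ * Bᴴ)) + A * (B * (Aᴴ * Wᴴ)) + A * (B * (Vᴴ * Bᴴ))
        + A * (W * (Aᴴ * Bᴴ)) + V * (B * (Aᴴ * Bᴴ)) + A * (B * (Aᴴ * Bᴴ))) := by
    rw [← sub_eq_zero, hV₁e, hW₁e, Matrix.conjTranspose_add, Matrix.conjTranspose_add]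
    trans (V * W * Vᴴ * ((V * Aᴴ + A * Vᴴ + A * Aᴴ) * Wᴴ)
        + V * W * ((1 - Vᴴ * V) * (Aᴴ * Wᴴ))
        + V * W * Vᴴ * (Wᴴ * (W * Bᴴ + B * Wᴴ + B * Bᴴ))
        + V * W * Vᴴ * ((1 - Wᴴ * W) * Bᴴ))
    · noncomm_ring
    · rw [hArel, hBrel, hVV0, hWW0]
      simp
  -- bound for the first (ΔV-linear) piece
  have hE1 : ‖(A * W - V * W * Vᴴ * A) * Vᴴ * Wᴴ‖ ≤ 2 * c * (ε * s) := by
    rw [nWhr, nVhr]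
    have e : A * W - V * W * Vᴴ * A = A * (W - 1) - (V * W * Vᴴ - 1) * A := by noncomm_ring
    rw [e]
    have h1 : ‖A * (W - 1)‖ ≤ ε * (c * s) :=
      (Matrix.l2_opNorm_mul _ _).trans (mul_le_mul hAn hWc (norm_nonneg _) hε0)
    have h2 : ‖(V * W * Vᴴ - 1) * A‖ ≤ c * s * ε := by
      have hc1 : ‖V * W * Vᴴ - 1‖ = ‖W - 1‖ := by
        have e2 : V * W * Vᴴ - 1 = V * ((W - 1) * Vᴴ) := by
          rw [show V * ((W - 1) * Vᴴ) = V * W * Vᴴ - V * Vᴴ from by noncomm_ring, hVu]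
        rw [e2, nVl, nVhr]
      refine (Matrix.l2_opNorm_mul _ _).trans ?_
      rw [hc1]
      exact mul_le_mul hWc hAn (norm_nonneg _) (by positivity)
    calc ‖A * (W - 1) - (V * W * Vᴴ - 1) * A‖ ≤ ε * (c * s) + c * s * ε :=
          (norm_sub_le _ _).trans (add_le_add h1 h2)
      _ = 2 * c * (ε * s) := by ring
  -- bound for the second (ΔW-linear) piece
  have hE2 : ‖V * ((B * Vᴴ - W * Vᴴ * Wᴴ * B) * Wᴴ)‖ ≤ 2 * c * (ε * s) := by
    rw [nVl, nWhr]
    have e : B * Vᴴ - W * Vᴴ * Wᴴ * B = B * (Vᴴ - 1) - (W * Vᴴ * Wᴴ - 1) * B := by noncomm_ring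
    rw [e]
    have hV1n : ‖Vᴴ - (1 : Matrix (Fin d) (Fin d) ℂ)‖ ≤ c * s := by
      rw [show Vᴴ - (1 : Matrix (Fin d) (Fin d) ℂ) = (V - 1)ᴴ from by
          rw [Matrix.conjTranspose_sub, Matrix.conjTranspose_one],
        Matrix.l2_opNorm_conjTranspose]
      exact hVc
    have h1 : ‖B * (Vᴴ - 1)‖ ≤ ε * (c * s) :=
      (Matrix.l2_opNorm_mul _ _).trans (mul_le_mul hBn hV1n (norm_nonneg _) hε0)
    have h2 : ‖(W * Vᴴ * Wᴴ - 1) * B‖ ≤ c * s * ε := by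
      have hc1 : ‖W * Vᴴ * Wᴴ - 1‖ = ‖Vᴴ - (1 : Matrix (Fin d) (Fin d) ℂ)‖ := by
        have e2 : W * Vᴴ * Wᴴ - 1 = W * ((Vᴴ - 1) * Wᴴ) := by
          rw [show W * ((Vᴴ - 1) * Wᴴ) = W * Vᴴ * Wᴴ - W * Wᴴ from by noncomm_ring, hWu]
        rw [e2, nWl, nWhr]
      refine (Matrix.l2_opNorm_mul _ _).trans ?_
      rw [hc1]
      exact mul_le_mul hV1n hBn (norm_nonneg _) (by positivity)
    calc ‖B * (Vᴴ - 1) - (W * Vᴴ * Wᴴ - 1) * B‖ ≤ ε * (c * s) + c * s * ε :=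
          (norm_sub_le _ _).trans (add_le_add h1 h2)
      _ = 2 * c * (ε * s) := by ring
  -- bounds for the quadratic junk terms
  have hcube : ε * (ε * ε) ≤ ε * ε := by nlinarith
  have hquart : ε * (ε * (ε * ε)) ≤ ε * ε := by nlinarith
  have hAAc : ‖A * Aᴴ‖ ≤ ε * ε :=
    (Matrix.l2_opNorm_mul _ _).trans (mul_le_mul hAn hAcn (norm_nonneg _) hε0)
  have hBBc : ‖B * Bᴴ‖ ≤ ε * ε :=
    (Matrix.l2_opNorm_mul _ _).trans (mul_le_mul hBn hBcn (norm_nonneg _) hε0)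
  have hj1 : ‖V * (W * (Vᴴ * (A * Aᴴ * Wᴴ)))‖ ≤ ε * ε := by
    rw [nVl, nWl, nVhl, nWhr]; exact hAAc
  have hj2 : ‖V * (W * (Vᴴ * (Wᴴ * (B * Bᴴ))))‖ ≤ ε * ε := by
    rw [nVl, nWl, nVhl, nWhl]; exact hBBc
  have hj3 : ‖A * B * Vᴴ * Wᴴ‖ ≤ ε * ε := by
    rw [nWhr, nVhr]
    exact (Matrix.l2_opNorm_mul _ _).trans (mul_le_mul hAn hBn (norm_nonneg _) hε0)
  have hj4 : ‖A * (W * (Aᴴ * Wᴴ))‖ ≤ ε * ε := by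
    refine (Matrix.l2_opNorm_mul _ _).trans ?_
    rw [nWl, nWhr]
    exact mul_le_mul hAn hAcn (norm_nonneg _) hε0
  have hj5 : ‖A * (W * (Vᴴ * Bᴴ))‖ ≤ ε * ε := by
    refine (Matrix.l2_opNorm_mul _ _).trans ?_
    rw [nWl, nVhl]
    exact mul_le_mul hAn hBcn (norm_nonneg _) hε0
  have hj6 : ‖V * (B * (Aᴴ * Wᴴ))‖ ≤ ε * ε := by
    rw [nVl]
    refine (Matrix.l2_opNorm_mul _ _).trans ?_
    rw [nWhr]
    exact mul_le_mul hBn hAcn (norm_nonneg _) hε0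
  have hj7 : ‖V * (B * (Vᴴ * Bᴴ))‖ ≤ ε * ε := by
    rw [nVl]
    refine (Matrix.l2_opNorm_mul _ _).trans ?_
    rw [nVhl]
    exact mul_le_mul hBn hBcn (norm_nonneg _) hε0
  have hj8 : ‖V * (W * (Aᴴ * Bᴴ))‖ ≤ ε * ε := by
    rw [nVl, nWl]
    exact (Matrix.l2_opNorm_mul _ _).trans (mul_le_mul hAcn hBcn (norm_nonneg _) hε0)
  have hj9 : ‖A * (B * (Aᴴ * Wᴴ))‖ ≤ ε * ε := by
    refine le_trans ?_ hcube
    refine (Matrix.l2_opNorm_mul _ _).trans ?_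
    refine mul_le_mul hAn ?_ (norm_nonneg _) hε0
    refine (Matrix.l2_opNorm_mul _ _).trans ?_
    rw [nWhr]
    exact mul_le_mul hBn hAcn (norm_nonneg _) hε0
  have hj10 : ‖A * (B * (Vᴴ * Bᴴ))‖ ≤ ε * ε := by
    refine le_trans ?_ hcube
    refine (Matrix.l2_opNorm_mul _ _).trans ?_
    refine mul_le_mul hAn ?_ (norm_nonneg _) hε0
    refine (Matrix.l2_opNorm_mul _ _).trans ?_
    rw [nVhl]
    exact mul_le_mul hBn hBcn (norm_nonneg _) hε0
  have hj11 : ‖A * (W * (Aᴴ * Bᴴ))‖ ≤ ε * ε := by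
    refine le_trans ?_ hcube
    refine (Matrix.l2_opNorm_mul _ _).trans ?_
    refine mul_le_mul hAn ?_ (norm_nonneg _) hε0
    rw [nWl]
    exact (Matrix.l2_opNorm_mul _ _).trans (mul_le_mul hAcn hBcn (norm_nonneg _) hε0)
  have hj12 : ‖V * (B * (Aᴴ * Bᴴ))‖ ≤ ε * ε := by
    refine le_trans ?_ hcube
    rw [nVl]
    refine (Matrix.l2_opNorm_mul _ _).trans ?_
    refine mul_le_mul hBn ?_ (norm_nonneg _) hε0
    exact (Matrix.l2_opNorm_mul _ _).trans (mul_le_mul hAcn hBcn (norm_nonneg _) hε0)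
  have hj13 : ‖A * (B * (Aᴴ * Bᴴ))‖ ≤ ε * ε := by
    refine le_trans ?_ hquart
    refine (Matrix.l2_opNorm_mul _ _).trans ?_
    refine mul_le_mul hAn ?_ (norm_nonneg _) hε0
    refine (Matrix.l2_opNorm_mul _ _).trans ?_
    refine mul_le_mul hBn ?_ (norm_nonneg _) hε0
    exact (Matrix.l2_opNorm_mul _ _).trans (mul_le_mul hAcn hBcn (norm_nonneg _) hε0)
  -- assemble
  have tadd : ∀ (x y : Matrix (Fin d) (Fin d) ℂ) (a b : ℝ), ‖x‖ ≤ a → ‖y‖ ≤ b →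
      ‖x + y‖ ≤ a + b := fun x y a b hx hy => (norm_add_le x y).trans (add_le_add hx hy)
  have tsub : ∀ (x y : Matrix (Fin d) (Fin d) ℂ) (a b : ℝ), ‖x‖ ≤ a → ‖y‖ ≤ b →
      ‖x - y‖ ≤ a + b := fun x y a b hx hy => (norm_sub_le x y).trans (add_le_add hx hy)
  have hj1' : ‖-(V * (W * (Vᴴ * (A * Aᴴ * Wᴴ))))‖ ≤ ε * ε := by rw [norm_neg]; exact hj1
  have hJ := tadd _ _ _ _ (tadd _ _ _ _ (tadd _ _ _ _ (tadd _ _ _ _ (tadd _ _ _ _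
    (tadd _ _ _ _ (tadd _ _ _ _ (tadd _ _ _ _ (tadd _ _ _ _ (tadd _ _ _ _ (tadd _ _ _ _
    (tsub _ _ _ _ hj1' hj2) hj3) hj4) hj5) hj6) hj7) hj8) hj9) hj10) hj11) hj12) hj13
  have htotal := tadd _ _ _ _ (tadd _ _ _ _ hE1 hE2) hJ
  rw [norm_sub_rev, master, hpow]
  refine htotal.trans ?_
  nlinarith [hεεs, hc.le, mul_nonneg hε0 hs0]
end

section
/- Let V, W ∈ SU(d) with ‖V − I‖ ≤ c·ε^{1/2} and ‖W − I‖ ≤ c·ε^{1/2}, and let V_n, W_n ∈ SU(d) with ‖V − V_n‖ ≤ ε, ‖W − W_n‖ ≤ ε. Suppose A, B are matrices with ‖A − V_n†‖ ≤ ε^{3/2} and ‖B − W_n†‖ ≤ ε^{3/2} and ‖A‖, ‖B‖ ≤ 2. Then ‖VWV†W† − V_n W_n A B‖ ≤ C·ε^{3/2} for a constant C depending only on c and d (for ε ≤ 1). -/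
open Matrix
open scoped Matrix.Norms.L2Operator

set_option maxHeartbeats 1600000

/-- `O(ε^{3/2})`-precise approximate inverses suffice in place of exact inverses in
the Solovay–Kitaev group commutator: `‖VWV†W† - V_n W_n A B‖ ≤ C ε^{3/2}`. -/
theorem group_commutator_with_approx_inverses (c : ℝ) (hc : 0 < c) (d : ℕ) :
    ∃ C : ℝ, 0 < C ∧
      ∀ (ε : ℝ) (V W Vn Wn A B : Matrix (Fin d) (Fin d) ℂ),
        V ∈ Matrix.specialUnitaryGroup (Fin d) ℂ →
        W ∈ Matrix.specialUnitaryGroup (Fin d) ℂ →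
        Vn ∈ Matrix.specialUnitaryGroup (Fin d) ℂ →
        Wn ∈ Matrix.specialUnitaryGroup (Fin d) ℂ →
        ε ≤ 1 →
        ‖V - 1‖ ≤ c * Real.sqrt ε → ‖W - 1‖ ≤ c * Real.sqrt ε →
        ‖V - Vn‖ ≤ ε → ‖W - Wn‖ ≤ ε →
        ‖A - Vnᴴ‖ ≤ ε ^ ((3 : ℝ) / 2) → ‖B - Wnᴴ‖ ≤ ε ^ ((3 : ℝ) / 2) →
        ‖A‖ ≤ 2 → ‖B‖ ≤ 2 →
        ‖V * W * Vᴴ * Wᴴ - Vn * Wn * A * B‖ ≤ C * ε ^ ((3 : ℝ) / 2) := by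
  refine ⟨4 * (c + 1) ^ 2 + 5, by positivity, ?_⟩
  intro ε V W Vn Wn A B hV hW hVn hWn hε1 hVI hWI hVVn hWWn hA hB hAn hBn
  -- ε is nonnegative
  have hε0 : 0 ≤ ε := le_trans (norm_nonneg _) hVVn
  set s : ℝ := Real.sqrt ε with hs
  have hs0 : 0 ≤ s := Real.sqrt_nonneg ε
  have hs2 : s ^ 2 = ε := Real.sq_sqrt hε0
  have hs1 : s ≤ 1 := by
    nlinarith [Real.sq_sqrt hε0]
  have he32 : ε ^ ((3 : ℝ) / 2) = s ^ 3 := by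
    rw [hs, Real.sqrt_eq_rpow, ← Real.rpow_natCast (ε ^ ((1:ℝ)/2)) 3,
      ← Real.rpow_mul hε0]
    norm_num
  rcases Nat.eq_zero_or_pos d with hd | hd
  · subst hd
    have : V * W * Vᴴ * Wᴴ - Vn * Wn * A * B = 0 := Subsingleton.elim _ _
    rw [this, norm_zero, he32]
    positivity
  haveI : Nonempty (Fin d) := Fin.pos_iff_nonempty.mp hd
  haveI : Nontrivial (Matrix (Fin d) (Fin d) ℂ) := inferInstance
  -- unitarity facts
  have hVu : V ∈ unitary (Matrix (Fin d) (Fin d) ℂ) := hV.1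
  have hWu : W ∈ unitary (Matrix (Fin d) (Fin d) ℂ) := hW.1
  have hVnu : Vn ∈ unitary (Matrix (Fin d) (Fin d) ℂ) := hVn.1
  have hWnu : Wn ∈ unitary (Matrix (Fin d) (Fin d) ℂ) := hWn.1
  have nV : ‖V‖ = 1 := CStarRing.norm_of_mem_unitary hVu
  have nVc : ‖Vᴴ‖ = 1 := by rw [Matrix.l2_opNorm_conjTranspose]; exact nV
  have nVn : ‖Vn‖ = 1 := CStarRing.norm_of_mem_unitary hVnu
  have nWn : ‖Wn‖ = 1 := CStarRing.norm_of_mem_unitary hWnu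
  have nVnc : ‖Vnᴴ‖ = 1 := by rw [Matrix.l2_opNorm_conjTranspose]; exact nVn
  have nWnc : ‖Wnᴴ‖ = 1 := by rw [Matrix.l2_opNorm_conjTranspose]; exact nWn
  have uV : V * Vᴴ = 1 := by
    have := hVu.2; rwa [Matrix.star_eq_conjTranspose] at this
  have uW : W * Wᴴ = 1 := by
    have := hWu.2; rwa [Matrix.star_eq_conjTranspose] at this
  have uVn : Vn * Vnᴴ = 1 := by
    have := hVnu.2; rwa [Matrix.star_eq_conjTranspose] at this
  have uWn : Wn * Wnᴴ = 1 := by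
    have := hWnu.2; rwa [Matrix.star_eq_conjTranspose] at this
  -- conjTranspose distance facts
  have hVVnc : ‖Vᴴ - Vnᴴ‖ ≤ ε := by
    rw [← Matrix.conjTranspose_sub, Matrix.l2_opNorm_conjTranspose]
    exact hVVn
  have hWWnc : ‖Wᴴ - Wnᴴ‖ ≤ ε := by
    rw [← Matrix.conjTranspose_sub, Matrix.l2_opNorm_conjTranspose]
    exact hWWn
  -- decomposition
  set E1 : Matrix (Fin d) (Fin d) ℂ := (V * W - W * V) * (Vᴴ * Wᴴ - Vnᴴ * Wnᴴ) with hE1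
  set E2 : Matrix (Fin d) (Fin d) ℂ :=
    (V * W - W * V - (Vn * Wn - Wn * Vn)) * (Vnᴴ * Wnᴴ) with hE2
  set E3 : Matrix (Fin d) (Fin d) ℂ :=
    Vn * Wn * (Vnᴴ * (Wnᴴ - B) + (Vnᴴ - A) * B) with hE3
  have a1 : V * W * Vᴴ * Wᴴ = 1 + (V * W - W * V) * (Vᴴ * Wᴴ) := by
    have h : (V * W - W * V) * (Vᴴ * Wᴴ) = V * W * Vᴴ * Wᴴ - W * (V * Vᴴ) * Wᴴ := by
      noncomm_ring
    rw [h, uV, mul_one, uW]; noncomm_ring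
  have a2 : Vn * Wn * Vnᴴ * Wnᴴ = 1 + (Vn * Wn - Wn * Vn) * (Vnᴴ * Wnᴴ) := by
    have h : (Vn * Wn - Wn * Vn) * (Vnᴴ * Wnᴴ)
        = Vn * Wn * Vnᴴ * Wnᴴ - Wn * (Vn * Vnᴴ) * Wnᴴ := by
      noncomm_ring
    rw [h, uVn, mul_one, uWn]; noncomm_ring
  have key : V * W * Vᴴ * Wᴴ - Vn * Wn * A * B = E1 + E2 + E3 := by
    have h3 : Vn * Wn * Vnᴴ * Wnᴴ - Vn * Wn * A * B = E3 := by
      rw [hE3]; noncomm_ring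
    have h12 : V * W * Vᴴ * Wᴴ - Vn * Wn * Vnᴴ * Wnᴴ = E1 + E2 := by
      rw [a1, a2, hE1, hE2]; noncomm_ring
    calc V * W * Vᴴ * Wᴴ - Vn * Wn * A * B
        = (V * W * Vᴴ * Wᴴ - Vn * Wn * Vnᴴ * Wnᴴ)
          + (Vn * Wn * Vnᴴ * Wnᴴ - Vn * Wn * A * B) := by abel
      _ = E1 + E2 + E3 := by rw [h3, h12]
  -- norm bounds
  have comm1 : ‖V * W - W * V‖ ≤ 2 * (c * s) ^ 2 := by
    have h : V * W - W * V = (V - 1) * (W - 1) - (W - 1) * (V - 1) := by noncomm_ring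
    rw [h]
    calc ‖(V - 1) * (W - 1) - (W - 1) * (V - 1)‖
        ≤ ‖(V - 1) * (W - 1)‖ + ‖(W - 1) * (V - 1)‖ := norm_sub_le _ _
      _ ≤ ‖V - 1‖ * ‖W - 1‖ + ‖W - 1‖ * ‖V - 1‖ := by
          gcongr <;> exact norm_mul_le _ _
      _ ≤ (c * s) * (c * s) + (c * s) * (c * s) := by
          gcongr <;> first | exact norm_nonneg _ | assumption
      _ = 2 * (c * s) ^ 2 := by ring
  have dualdist : ‖Vᴴ * Wᴴ - Vnᴴ * Wnᴴ‖ ≤ 2 * ε := by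
    have h : Vᴴ * Wᴴ - Vnᴴ * Wnᴴ = Vᴴ * (Wᴴ - Wnᴴ) + (Vᴴ - Vnᴴ) * Wnᴴ := by noncomm_ring
    rw [h]
    calc ‖Vᴴ * (Wᴴ - Wnᴴ) + (Vᴴ - Vnᴴ) * Wnᴴ‖
        ≤ ‖Vᴴ * (Wᴴ - Wnᴴ)‖ + ‖(Vᴴ - Vnᴴ) * Wnᴴ‖ := norm_add_le _ _
      _ ≤ ‖Vᴴ‖ * ‖Wᴴ - Wnᴴ‖ + ‖Vᴴ - Vnᴴ‖ * ‖Wnᴴ‖ := by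
          gcongr <;> exact norm_mul_le _ _
      _ ≤ 1 * ε + ε * 1 := by rw [nVc, nWnc]; gcongr <;> simp [hWWnc, hVVnc]
      _ = 2 * ε := by ring
  have hVnI : ‖Vn - 1‖ ≤ ε + c * s := by
    calc ‖Vn - 1‖ = ‖(Vn - V) + (V - 1)‖ := by congr 1; abel
      _ ≤ ‖Vn - V‖ + ‖V - 1‖ := norm_add_le _ _
      _ ≤ ε + c * s := by rw [norm_sub_rev]; gcongr
  have comm2 : ‖V * W - W * V - (Vn * Wn - Wn * Vn)‖
      ≤ 2 * (ε * (c * s)) + 2 * ((ε + c * s) * ε) := by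
    have h : V * W - W * V - (Vn * Wn - Wn * Vn)
        = ((V - Vn) * (W - 1) - (W - 1) * (V - Vn))
          + ((Vn - 1) * (W - Wn) - (W - Wn) * (Vn - 1)) := by noncomm_ring
    rw [h]
    have b1 : ‖(V - Vn) * (W - 1) - (W - 1) * (V - Vn)‖ ≤ 2 * (ε * (c * s)) := by
      calc ‖(V - Vn) * (W - 1) - (W - 1) * (V - Vn)‖
          ≤ ‖(V - Vn) * (W - 1)‖ + ‖(W - 1) * (V - Vn)‖ := norm_sub_le _ _
        _ ≤ ‖V - Vn‖ * ‖W - 1‖ + ‖W - 1‖ * ‖V - Vn‖ := by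
            gcongr <;> exact norm_mul_le _ _
        _ ≤ ε * (c * s) + (c * s) * ε := by
            gcongr <;> first | exact norm_nonneg _ | assumption
        _ = 2 * (ε * (c * s)) := by ring
    have b2 : ‖(Vn - 1) * (W - Wn) - (W - Wn) * (Vn - 1)‖ ≤ 2 * ((ε + c * s) * ε) := by
      calc ‖(Vn - 1) * (W - Wn) - (W - Wn) * (Vn - 1)‖
          ≤ ‖(Vn - 1) * (W - Wn)‖ + ‖(W - Wn) * (Vn - 1)‖ := norm_sub_le _ _
        _ ≤ ‖Vn - 1‖ * ‖W - Wn‖ + ‖W - Wn‖ * ‖Vn - 1‖ := by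
            gcongr <;> exact norm_mul_le _ _
        _ ≤ (ε + c * s) * ε + ε * (ε + c * s) := by
            gcongr <;> first | exact norm_nonneg _ | assumption
        _ = 2 * ((ε + c * s) * ε) := by ring
    calc ‖_ + _‖ ≤ ‖(V - Vn) * (W - 1) - (W - 1) * (V - Vn)‖
          + ‖(Vn - 1) * (W - Wn) - (W - Wn) * (Vn - 1)‖ := norm_add_le _ _
      _ ≤ 2 * (ε * (c * s)) + 2 * ((ε + c * s) * ε) := add_le_add b1 b2
  have bE1 : ‖E1‖ ≤ 2 * (c * s) ^ 2 * (2 * ε) := by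
    calc ‖E1‖ ≤ ‖V * W - W * V‖ * ‖Vᴴ * Wᴴ - Vnᴴ * Wnᴴ‖ := norm_mul_le _ _
      _ ≤ 2 * (c * s) ^ 2 * (2 * ε) := by
          have := mul_le_mul comm1 dualdist (norm_nonneg _) (by positivity)
          linarith
  have nProd : ‖Vnᴴ * Wnᴴ‖ ≤ 1 := by
    calc ‖Vnᴴ * Wnᴴ‖ ≤ ‖Vnᴴ‖ * ‖Wnᴴ‖ := norm_mul_le _ _
      _ = 1 := by rw [nVnc, nWnc]; norm_num
  have bE2 : ‖E2‖ ≤ 2 * (ε * (c * s)) + 2 * ((ε + c * s) * ε) := by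
    calc ‖E2‖ ≤ ‖V * W - W * V - (Vn * Wn - Wn * Vn)‖ * ‖Vnᴴ * Wnᴴ‖ := norm_mul_le _ _
      _ ≤ (2 * (ε * (c * s)) + 2 * ((ε + c * s) * ε)) * 1 := by
          apply mul_le_mul comm2 nProd (norm_nonneg _)
          positivity
      _ = 2 * (ε * (c * s)) + 2 * ((ε + c * s) * ε) := mul_one _
  have he32nn : 0 ≤ ε ^ ((3:ℝ)/2) := by rw [he32]; positivity
  have bE3 : ‖E3‖ ≤ 3 * ε ^ ((3:ℝ)/2) := by
    have hAn' : ‖Vnᴴ - A‖ ≤ ε ^ ((3:ℝ)/2) := by rw [norm_sub_rev]; exact hA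
    have hBn' : ‖Wnᴴ - B‖ ≤ ε ^ ((3:ℝ)/2) := by rw [norm_sub_rev]; exact hB
    have inner : ‖Vnᴴ * (Wnᴴ - B) + (Vnᴴ - A) * B‖ ≤ 3 * ε ^ ((3:ℝ)/2) := by
      calc ‖Vnᴴ * (Wnᴴ - B) + (Vnᴴ - A) * B‖
          ≤ ‖Vnᴴ * (Wnᴴ - B)‖ + ‖(Vnᴴ - A) * B‖ := norm_add_le _ _
        _ ≤ ‖Vnᴴ‖ * ‖Wnᴴ - B‖ + ‖Vnᴴ - A‖ * ‖B‖ := by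
            exact add_le_add (norm_mul_le _ _) (norm_mul_le _ _)
        _ ≤ 1 * ε ^ ((3:ℝ)/2) + ε ^ ((3:ℝ)/2) * 2 := by
            refine add_le_add (mul_le_mul (le_of_eq nVnc) hBn' (norm_nonneg _) zero_le_one)
              (mul_le_mul hAn' hBn (norm_nonneg _) he32nn)
        _ = 3 * ε ^ ((3:ℝ)/2) := by ring
    have nVnWn : ‖Vn * Wn‖ ≤ 1 := by
      calc ‖Vn * Wn‖ ≤ ‖Vn‖ * ‖Wn‖ := norm_mul_le _ _
        _ = 1 := by rw [nVn, nWn]; norm_num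
    calc ‖E3‖ ≤ ‖Vn * Wn‖ * ‖Vnᴴ * (Wnᴴ - B) + (Vnᴴ - A) * B‖ := norm_mul_le _ _
      _ ≤ 1 * (3 * ε ^ ((3:ℝ)/2)) :=
          mul_le_mul nVnWn inner (norm_nonneg _) zero_le_one
      _ = 3 * ε ^ ((3:ℝ)/2) := one_mul _
  -- combine
  rw [key]
  calc ‖E1 + E2 + E3‖ ≤ ‖E1‖ + ‖E2‖ + ‖E3‖ :=
        le_trans (norm_add_le _ _) (add_le_add_left (norm_add_le _ _) _)
    _ ≤ 2 * (c * s) ^ 2 * (2 * ε) + (2 * (ε * (c * s)) + 2 * ((ε + c * s) * ε))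
          + 3 * ε ^ ((3:ℝ)/2) := add_le_add (add_le_add bE1 bE2) bE3
    _ ≤ (4 * (c + 1) ^ 2 + 5) * ε ^ ((3:ℝ)/2) := by
        rw [he32, ← hs2]
        have p1 : 0 ≤ s ^ 3 * (1 - s) :=
          mul_nonneg (pow_nonneg hs0 3) (sub_nonneg.mpr hs1)
        have p2 : 0 ≤ c ^ 2 * (s ^ 3 * (1 - s)) := mul_nonneg (sq_nonneg c) p1
        have p3 : 0 ≤ c * s ^ 3 := mul_nonneg hc.le (pow_nonneg hs0 3)
        have p4 : 0 ≤ s ^ 3 := pow_nonneg hs0 3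
        nlinarith [p1, p2, p3, p4]
end
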